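/- arXiv:2510.14844 — 8 statements merged into one kernel-verified Lean document; each statement's English description precedes it below -/
import Mathlib

section
/- Let d, m ∈ ℕ with m ≥ 2, let 0 < ε₁ ≤ 0.5, 0 < δ₁ ≤ 0.5 and 0 < ε_d < 0.1. Let S = {(x_1,y_1),…,(x_m,y_m)} ⊆ ℝ^d × {−1,1} satisfy Assumption(ψ, φ) with ψ ≤ 0.1 and φ ≤ ε_d/(4m). Suppose w ∈ ℝ^d is an (ε₁, δ₁)-approximate KKT point of the margin-maximization problem w.r.t. S with multipliers λ_1,…,λ_m. Fix l ∈ [m] and set ŵ = w − λ_l y_l x_l. Then the rescaled vector (1/(1 − 0.6·ε_d/m))·ŵ is an (ε₁ + ε₁ε_d/(m − ε_d), δ₁ + δ₁ε_d/(m − ε_d) + 7.2·ε_d/m)-approximate KKT point of the margin-maximization problem w.r.t. the retained dataset S \ {(x_l, y_l)}, with multipliers λ_i/(1 − 0.6·ε_d/m) for i ∈ [m], i ≠ l. -/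
/-!
The multipliers are bounded: at a largest multiplier `λ_j`, stationarity gives
`λ_j ‖x_j‖² ≤ y_j ⟨w, x_j⟩ + ε₁ ‖x_j‖ + λ_j Σ_{i ≠ j} |⟨x_i, x_j⟩|`, and multiplying by `λ_j` and
using complementary slackness yields a quadratic inequality forcing `λ_j ≤ 2.1`.
Removing `λ_l y_l x_l` from `w` leaves the stationarity residual unchanged, and changes every other
margin by `λ_l y_l ⟨x_l, x_i⟩`, which near-orthogonality makes at most `0.525 ε_d / m`;
dividing by `1 - 0.6 ε_d / m` restores primal feasibility at the price of the stated slack.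
-/

open Finset
open scoped RealInnerProductSpace

section InnerProduct

variable {ι E : Type*} [Fintype ι] [NormedAddCommGroup E] [InnerProductSpace ℝ E]

/-- `w` is an `(ε, δ)`-approximate KKT point of margin maximization on the labelled points
`(x i, y i)`, with multipliers `lam`. -/
structure IsApproxKKT (x : ι → E) (y : ι → ℝ) (ε δ : ℝ) (w : E) (lam : ι → ℝ) : Prop where
  nonneg : ∀ i, 0 ≤ lam i
  stationarity : ‖w - ∑ i, (lam i * y i) • x i‖ ≤ ε
  slackness : ∀ i, lam i * (y i * ⟪w, x i⟫ - 1) ≤ δ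
  feasibility : ∀ i, 1 ≤ y i * ⟪w, x i⟫

theorem inner_sum_smul_eq_add_sum_erase [DecidableEq ι] (c : ι → ℝ) (x : ι → E) (j : ι) :
    ⟪∑ i, c i • x i, x j⟫ = c j * ‖x j‖ ^ 2 + ∑ i ∈ univ.erase j, c i * ⟪x i, x j⟫ := by
  simp only [sum_inner, real_inner_smul_left]
  rw [← add_sum_erase _ _ (mem_univ j), real_inner_self_eq_norm_sq]

theorem abs_sum_erase_mul_inner_le [DecidableEq ι] {c : ι → ℝ} {M : ℝ} (hc : ∀ i, |c i| ≤ M)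
    (x : ι → E) (j : ι) :
    |∑ i ∈ univ.erase j, c i * ⟪x i, x j⟫| ≤ M * ∑ i ∈ univ.erase j, |⟪x i, x j⟫| := by
  rw [mul_sum]
  refine (abs_sum_le_sum_abs _ _).trans (sum_le_sum fun i _ => ?_)
  rw [abs_mul]
  exact mul_le_mul_of_nonneg_right (hc i) (abs_nonneg _)

theorem sum_erase_abs_inner_le_card_mul [DecidableEq ι] {x : ι → E} {b : ℝ} (hb : 0 ≤ b)
    (hx : ∀ i j, i ≠ j → |⟪x i, x j⟫| ≤ b) (j : ι) :
    ∑ i ∈ univ.erase j, |⟪x i, x j⟫| ≤ Fintype.card ι * b :=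
  calc ∑ i ∈ univ.erase j, |⟪x i, x j⟫|
      ≤ ∑ _i ∈ univ.erase j, b := sum_le_sum fun i hi => hx i j (ne_of_mem_erase hi)
    _ ≤ ∑ _i : ι, b := sum_le_sum_of_subset_of_nonneg (erase_subset _ _) fun _ _ _ => hb
    _ = Fintype.card ι * b := by rw [sum_const, card_univ, nsmul_eq_mul]

theorem one_div_smul_sub_sub_sum_erase_eq [DecidableEq ι] (c : ℝ) (w : E) (x : ι → E)
    (y lam : ι → ℝ) (l : ι) :
    (1 / c) • (w - (lam l * y l) • x l) - ∑ i ∈ univ.erase l, (lam i / c * y i) • x i =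
      (1 / c) • (w - ∑ i, (lam i * y i) • x i) := by
  have hscale : ∀ i, (lam i / c * y i) • x i = (1 / c) • (lam i * y i) • x i := fun i => by
    rw [smul_smul]; ring_nf
  simp only [hscale, ← smul_sum, ← add_sum_erase _ _ (mem_univ l), smul_sub, smul_add]
  abel

theorem inner_one_div_smul_sub_smul (c a : ℝ) (w u z : E) :
    ⟪(1 / c) • (w - a • u), z⟫ = (⟪w, z⟫ - a * ⟪u, z⟫) / c := by
  rw [real_inner_smul_left, inner_sub_left, real_inner_smul_left]
  ring

namespace IsApproxKKT

variable {x : ι → E} {y : ι → ℝ} {ε δ : ℝ} {w : E} {lam : ι → ℝ}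

theorem delta_nonneg (h : IsApproxKKT x y ε δ w lam) (i : ι) : 0 ≤ δ :=
  (mul_nonneg (h.nonneg i) (sub_nonneg.2 (h.feasibility i))).trans (h.slackness i)

theorem mul_norm_sq_le_of_forall_le [DecidableEq ι] (h : IsApproxKKT x y ε δ w lam)
    (hy : ∀ i, |y i| = 1) {κ : ℝ} {j : ι} (hj : ∀ i, lam i ≤ lam j)
    (hκ : ∑ i ∈ univ.erase j, |⟪x i, x j⟫| ≤ κ) :
    lam j * ‖x j‖ ^ 2 ≤ y j * ⟪w, x j⟫ + ε * ‖x j‖ + κ * lam j := by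
  set v := ∑ i, (lam i * y i) • x i
  set coupling := y j * ∑ i ∈ univ.erase j, lam i * y i * ⟪x i, x j⟫
  have hyj : y j * y j = 1 := by rw [← abs_mul_self, abs_mul, hy j, one_mul]
  have hsplit : y j * ⟪w, x j⟫ = y j * ⟪w - v, x j⟫ + lam j * ‖x j‖ ^ 2 + coupling := by
    rw [inner_sub_left, inner_sum_smul_eq_add_sum_erase]
    linear_combination (lam j * ‖x j‖ ^ 2) * hyj
  have hresidual : |y j * ⟪w - v, x j⟫| ≤ ε * ‖x j‖ := by
    rw [abs_mul, hy j, one_mul]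
    exact (abs_real_inner_le_norm _ _).trans
      (mul_le_mul_of_nonneg_right h.stationarity (norm_nonneg _))
  have hcoupling : |coupling| ≤ κ * lam j := by
    have hc : ∀ i, |lam i * y i| ≤ lam j := fun i => by
      rw [abs_mul, hy i, mul_one, abs_of_nonneg (h.nonneg i)]
      exact hj i
    rw [abs_mul, hy j, one_mul, mul_comm κ]
    exact (abs_sum_erase_mul_inner_le hc x j).trans (mul_le_mul_of_nonneg_left hκ (h.nonneg j))
  linarith [neg_abs_le (y j * ⟪w - v, x j⟫), neg_abs_le coupling]

theorem lam_le [DecidableEq ι] (h : IsApproxKKT x y ε δ w lam)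
    (hy : ∀ i, |y i| = 1) {ψ : ℝ} (hψ : ψ ≤ 0.1)
    (hnorm : ∀ i, 1 - ψ ≤ ‖x i‖ ^ 2 ∧ ‖x i‖ ^ 2 ≤ 1 + ψ) (hε : ε ≤ 0.5) (hδ : δ ≤ 0.5)
    (hκ : ∀ j, ∑ i ∈ univ.erase j, |⟪x i, x j⟫| ≤ 0.025) (i : ι) : lam i ≤ 2.1 := by
  obtain ⟨j, -, hj⟩ := exists_max_image univ lam ⟨i, mem_univ i⟩
  refine (hj i (mem_univ i)).trans ?_
  have hmax := h.mul_norm_sq_le_of_forall_le hy (fun k => hj k (mem_univ k)) (hκ j)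
  have hlam := h.nonneg j
  have hslack := h.slackness j
  have hx1 : 0.9 ≤ ‖x j‖ ^ 2 := by linarith [(hnorm j).1]
  have hx2 : ‖x j‖ ^ 2 ≤ 1.1 := by linarith [(hnorm j).2]
  have hεx : ε * ‖x j‖ ≤ 0.525 := by nlinarith [norm_nonneg (x j)]
  have hquad : 0.875 * lam j ^ 2 ≤ 1.525 * lam j + 0.5 := by
    nlinarith [mul_le_mul_of_nonneg_left hmax hlam]
  nlinarith

end IsApproxKKT

end InnerProduct

theorem div_one_sub_mul_div_le {ε a e M : ℝ} (hε : 0 ≤ ε) (ha : a ≤ 1) (he : 0 ≤ e)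
    (heM : e < M) : ε / (1 - a * (e / M)) ≤ ε + ε * (e / (M - e)) := by
  have hM : 0 < M := he.trans_lt heM
  have h1 : ε / (1 - a * (e / M)) = ε * M / (M - a * e) := by field_simp
  have h2 : ε + ε * (e / (M - e)) = ε * M / (M - e) := by field_simp [(sub_pos.2 heM).ne']; ring
  rw [h1, h2]
  exact div_le_div_of_nonneg_left (by positivity) (sub_pos.2 heM) (by nlinarith)

theorem rescaled_slack_le {lam P r δ u : ℝ} (hlam0 : 0 ≤ lam) (hlam : lam ≤ 2.1)
    (hslack : lam * (P - 1) ≤ δ) (hδ : δ ≤ 0.5) (hu0 : 0 ≤ u) (hu : u ≤ 0.1)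
    (hr : |r| ≤ 0.525 * u) :
    lam / (1 - 0.6 * u) * ((P - r) / (1 - 0.6 * u) - 1) ≤ δ + 7.2 * u := by
  have hc : 0 < 1 - 0.6 * u := by linarith
  have hnum : lam * (P - r - (1 - 0.6 * u)) ≤ δ + 2.3625 * u := by
    nlinarith [mul_le_mul_of_nonneg_left ((neg_le_abs r).trans hr) hlam0,
      mul_le_mul_of_nonneg_right hlam hu0]
  have heq : lam / (1 - 0.6 * u) * ((P - r) / (1 - 0.6 * u) - 1) =
      lam * (P - r - (1 - 0.6 * u)) / (1 - 0.6 * u) ^ 2 := by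
    field_simp
  rw [heq, div_le_iff₀ (by positivity)]
  nlinarith [mul_nonneg (sub_nonneg.2 hδ) (mul_nonneg hu0 (by linarith : (0:ℝ) ≤ 1.2 - 0.36 * u)),
    mul_nonneg hu0 hu0, mul_nonneg (mul_nonneg hu0 hu0) hu0]

theorem stmt_0_general
    (d m : ℕ)
    (ε₁ δ₁ εd ψ φ : ℝ)
    (hε₁le : ε₁ ≤ 0.5)
    (hδ₁le : δ₁ ≤ 0.5)
    (hεdpos : 0 < εd) (hεdlt : εd < 0.1)
    (hψ : ψ ≤ 0.1) (hφ : φ ≤ εd / (4 * m))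
    (x : Fin m → EuclideanSpace ℝ (Fin d)) (y : Fin m → ℝ)
    (hy : ∀ i, y i = 1 ∨ y i = -1)
    (hnorm : ∀ i, 1 - ψ ≤ ‖x i‖ ^ 2 ∧ ‖x i‖ ^ 2 ≤ 1 + ψ)
    (hortho : ∀ i j, i ≠ j → |(inner ℝ (x i) (x j) : ℝ)| ≤ φ)
    (w : EuclideanSpace ℝ (Fin d)) (lam : Fin m → ℝ)
    (hlam : ∀ i, 0 ≤ lam i)
    (hstat : ‖w - ∑ i, (lam i * y i) • x i‖ ≤ ε₁)
    (hcs : ∀ i, lam i * (y i * (inner ℝ w (x i) : ℝ) - 1) ≤ δ₁)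
    (hpf : ∀ i, 1 ≤ y i * (inner ℝ w (x i) : ℝ))
    (l : Fin m) :
    (∀ i, i ≠ l → 0 ≤ lam i / (1 - 0.6 * εd / m)) ∧
    ‖(1 / (1 - 0.6 * εd / m)) • (w - (lam l * y l) • x l) -
        ∑ i ∈ Finset.univ.erase l, ((lam i / (1 - 0.6 * εd / m)) * y i) • x i‖ ≤
      ε₁ + ε₁ * εd / (m - εd) ∧
    (∀ i, i ≠ l →
      (lam i / (1 - 0.6 * εd / m)) *
          (y i * (inner ℝ ((1 / (1 - 0.6 * εd / m)) • (w - (lam l * y l) • x l)) (x i) : ℝ) - 1) ≤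
        δ₁ + δ₁ * εd / (m - εd) + 7.2 * εd / m) ∧
    (∀ i, i ≠ l →
      1 ≤ y i * (inner ℝ ((1 / (1 - 0.6 * εd / m)) • (w - (lam l * y l) • x l)) (x i) : ℝ)) := by
  have hm1 : (1 : ℝ) ≤ m := by exact_mod_cast l.pos
  have hK : IsApproxKKT x y ε₁ δ₁ w lam := ⟨hlam, hstat, hcs, hpf⟩
  have hyabs : ∀ i, |y i| = 1 := fun i => (abs_eq zero_le_one).2 (hy i)
  have hclose : ∀ i j, i ≠ j → |⟪x i, x j⟫| ≤ εd / (4 * m) := fun i j hij =>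
    (hortho i j hij).trans hφ
  have hκ : ∀ j, ∑ i ∈ univ.erase j, |⟪x i, x j⟫| ≤ 0.025 := fun j => by
    refine (sum_erase_abs_inner_le_card_mul (by positivity) hclose j).trans ?_
    rw [Fintype.card_fin, mul_div_left_comm, div_mul_cancel_right₀ (by positivity)]
    linarith
  have hlam_le := hK.lam_le hyabs hψ hnorm hε₁le hδ₁le hκ
  simp only [mul_div_assoc, inner_one_div_smul_sub_smul, one_div_smul_sub_sub_sum_erase_eq]
  set u := εd / (m : ℝ)
  have hu0 : 0 ≤ u := by positivity
  have hu : u ≤ 0.1 := by rw [div_le_iff₀ (by positivity)]; nlinarith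
  have hc : 0 < 1 - 0.6 * u := by linarith
  have hshift : ∀ i, i ≠ l → |y i * (lam l * y l * ⟪x l, x i⟫)| ≤ 0.525 * u := fun i hi => by
    rw [abs_mul, abs_mul, abs_mul, hyabs, hyabs, abs_of_nonneg (hlam l), one_mul, mul_one]
    calc lam l * |⟪x l, x i⟫| ≤ 2.1 * (εd / (4 * m)) :=
          mul_le_mul (hlam_le l) (hclose l i (Ne.symm hi)) (abs_nonneg _) (by norm_num)
      _ = 0.525 * u := by ring
  refine ⟨fun i _ => div_nonneg (hlam i) hc.le, ?_, fun i hi => ?_, fun i hi => ?_⟩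
  · rw [norm_smul, Real.norm_of_nonneg (one_div_pos.2 hc).le, one_div_mul_eq_div]
    exact (div_le_div_of_nonneg_right hstat hc.le).trans
      (div_one_sub_mul_div_le ((norm_nonneg _).trans hstat) (by norm_num) hεdpos.le (by linarith))
  · rw [mul_div_assoc' (y i), mul_sub (y i)]
    have := rescaled_slack_le (hlam i) (hlam_le i) (hcs i) hδ₁le hu0 hu (hshift i hi)
    have : 0 ≤ δ₁ * (εd / (m - εd)) :=
      mul_nonneg (hK.delta_nonneg l) (div_nonneg hεdpos.le (by linarith))
    linarith
  · rw [mul_div_assoc' (y i), mul_sub (y i), one_le_div hc]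
    linarith [hpf i, le_abs_self (y i * (lam l * y l * ⟪x l, x i⟫)), hshift i hi]

/-- Unlearning a single point from a linear predictor via one gradient-ascent
step: the rescaled vector `(1/(1 - 0.6 εd/m)) • (w - λ_l y_l x_l)` is an approximate KKT point
of the margin-maximization problem w.r.t. the retained dataset `S \ {(x_l, y_l)}`,
with multipliers `λ_i / (1 - 0.6 εd/m)`. -/
theorem stmt_0
    (d m : ℕ) (hm : 2 ≤ m)
    (ε₁ δ₁ εd ψ φ : ℝ)
    (hε₁pos : 0 < ε₁) (hε₁le : ε₁ ≤ 0.5)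
    (hδ₁pos : 0 < δ₁) (hδ₁le : δ₁ ≤ 0.5)
    (hεdpos : 0 < εd) (hεdlt : εd < 0.1)
    (hψ : ψ ≤ 0.1) (hφ : φ ≤ εd / (4 * m))
    (x : Fin m → EuclideanSpace ℝ (Fin d)) (y : Fin m → ℝ)
    (hy : ∀ i, y i = 1 ∨ y i = -1)
    (hnorm : ∀ i, 1 - ψ ≤ ‖x i‖ ^ 2 ∧ ‖x i‖ ^ 2 ≤ 1 + ψ)
    (hortho : ∀ i j, i ≠ j → |(inner ℝ (x i) (x j) : ℝ)| ≤ φ)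
    (w : EuclideanSpace ℝ (Fin d)) (lam : Fin m → ℝ)
    (hlam : ∀ i, 0 ≤ lam i)
    (hstat : ‖w - ∑ i, (lam i * y i) • x i‖ ≤ ε₁)
    (hcs : ∀ i, lam i * (y i * (inner ℝ w (x i) : ℝ) - 1) ≤ δ₁)
    (hpf : ∀ i, 1 ≤ y i * (inner ℝ w (x i) : ℝ))
    (l : Fin m) :
    (∀ i, i ≠ l → 0 ≤ lam i / (1 - 0.6 * εd / m)) ∧
    ‖(1 / (1 - 0.6 * εd / m)) • (w - (lam l * y l) • x l) -
        ∑ i ∈ Finset.univ.erase l, ((lam i / (1 - 0.6 * εd / m)) * y i) • x i‖ ≤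
      ε₁ + ε₁ * εd / (m - εd) ∧
    (∀ i, i ≠ l →
      (lam i / (1 - 0.6 * εd / m)) *
          (y i * (inner ℝ ((1 / (1 - 0.6 * εd / m)) • (w - (lam l * y l) • x l)) (x i) : ℝ) - 1) ≤
        δ₁ + δ₁ * εd / (m - εd) + 7.2 * εd / m) ∧
    (∀ i, i ≠ l →
      1 ≤ y i * (inner ℝ ((1 / (1 - 0.6 * εd / m)) • (w - (lam l * y l) • x l)) (x i) : ℝ)) :=
  stmt_0_general d m ε₁ δ₁ εd ψ φ hε₁le hδ₁le hεdpos hεdlt hψ hφ x y hy hnorm hortho w lam hlam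
    hstat hcs hpf l
end

section
/- There exists a universal constant C > 0 such that the following holds for all d, m ∈ ℕ with m ≥ 2, all 0 < ε₁ ≤ 0.5, 0 < δ₁ ≤ 0.5, 0 < ε_d < 0.1, every dataset S = {(x_1,y_1),…,(x_m,y_m)} ⊆ ℝ^d × {−1,1} satisfying Assumption(ψ, φ) with ψ ≤ 0.1 and φ ≤ ε_d/(4m), every (ε₁, δ₁)-approximate KKT point w of the margin-maximization problem w.r.t. S with multipliers λ_1,…,λ_m, and every l ∈ [m]: setting ŵ = w − λ_l y_l x_l, if w* ∈ ℝ^d is a global optimum of the problem minimize ½‖v‖² subject to y_i ⟨v, x_i⟩ ≥ 1 for all i ∈ [m] \ {l}, then ⟨ŵ, w*⟩ ≥ (1 − C(√ε_d + √ε₁ + √δ₁))·‖ŵ‖·‖w*‖. -/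
/-!
Write `s i = y i • x i`, `Λ = ∑ i, λ i` and `ŵ = w - λ l • s l`. Near orthogonality makes
`‖∑ i, λ i • s i‖²` comparable to `∑ i, λ i ²`, hence `Λ² ≲ m ‖w‖²`, while complementary slackness
gives `‖w‖² ≲ Λ + m δ₁`; together `Λ ≤ 3 m`. So removing the `l`-th term moves each retained margin
`⟪ŵ, s i⟫` by at most `λ l φ ≤ 3 m φ = O(ε_d)`: a rescaling of `ŵ` is feasible for the retained
problem, and `‖w*‖ ≲ ‖ŵ‖`. On the other hand `ŵ` is `ε₁`-close to `u = ∑ i ≠ l, λ i • s i`, and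
`⟪ŵ, u⟫ ≲ ∑ i ≠ l, λ i ≤ ⟪u, w*⟫`, so `‖ŵ‖² ≤ ⟪ŵ, w*⟫` up to errors
`O(ε₁ (‖ŵ‖ + ‖w*‖) + m (δ₁ + ε_d))`. Since any separator of `m - 1` nearly orthogonal points with
unit margins has `‖w*‖² ≳ m`, all errors are `O(ε_d + ε₁ + δ₁) ‖ŵ‖ ‖w*‖`, and `t ≤ √t` on `[0, 1]`
finishes.
-/

open Finset
open scoped RealInnerProductSpace

variable {E ι : Type*} [NormedAddCommGroup E] [InnerProductSpace ℝ E]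

theorem norm_sum_smul_sq (t : Finset ι) (c : ι → ℝ) (s : ι → E) :
    ‖∑ i ∈ t, c i • s i‖ ^ 2 = ∑ i ∈ t, ∑ j ∈ t, c i * c j * ⟪s i, s j⟫ := by
  rw [← real_inner_self_eq_norm_sq, sum_inner]
  refine sum_congr rfl fun i _ => ?_
  rw [real_inner_smul_left, inner_sum, mul_sum]
  refine sum_congr rfl fun j _ => ?_
  rw [real_inner_smul_right]
  ring

theorem norm_sq_le_inner_add_mul_norm {u v : E} {ε : ℝ} (h : ‖v - u‖ ≤ ε) :
    ‖v‖ ^ 2 ≤ ⟪v, u⟫ + ε * ‖v‖ := by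
  have : ⟪v, v - u⟫ ≤ ε * ‖v‖ :=
    (real_inner_le_norm _ _).trans (by rw [mul_comm]; gcongr)
  rw [inner_sub_right, real_inner_self_eq_norm_sq] at this
  linarith

theorem mul_norm_le_of_forall_norm_le {s : ι → E} {S : Set ι} {wstar v : E} {κ : ℝ}
    (hopt : ∀ v, (∀ i ∈ S, 1 ≤ ⟪v, s i⟫) → ‖wstar‖ ≤ ‖v‖) (hκ : 0 < κ)
    (hv : ∀ i ∈ S, κ ≤ ⟪v, s i⟫) : κ * ‖wstar‖ ≤ ‖v‖ := by
  have hfeas : ∀ i ∈ S, 1 ≤ ⟪κ⁻¹ • v, s i⟫ := fun i hi => by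
    rw [real_inner_smul_left, ← div_eq_inv_mul, one_le_div hκ]
    exact hv i hi
  have := hopt _ hfeas
  rw [norm_smul, Real.norm_of_nonneg (inv_nonneg.2 hκ.le), inv_mul_eq_div, le_div_iff₀ hκ] at this
  linarith

/-- Assumption(ψ, φ) of the paper. -/
structure NearlyOrthogonal (s : ι → E) (ψ φ : ℝ) : Prop where
  norm_sq_mem : ∀ i, 1 - ψ ≤ ‖s i‖ ^ 2 ∧ ‖s i‖ ^ 2 ≤ 1 + ψ
  abs_inner_le : ∀ i j, i ≠ j → |⟪s i, s j⟫| ≤ φ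

namespace NearlyOrthogonal

variable {s : ι → E} {ψ φ : ℝ}

theorem smul_of_abs_eq_one (hs : NearlyOrthogonal s ψ φ) {y : ι → ℝ} (hy : ∀ i, |y i| = 1) :
    NearlyOrthogonal (fun i => y i • s i) ψ φ where
  norm_sq_mem i := by simpa [norm_smul, hy i] using hs.norm_sq_mem i
  abs_inner_le i j hij := by
    simpa [real_inner_smul_left, real_inner_smul_right, abs_mul, hy] using hs.abs_inner_le i j hij

theorem nonneg [Fintype ι] (hs : NearlyOrthogonal s ψ φ) (hι : 1 < Fintype.card ι) : 0 ≤ φ :=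
  let ⟨i, j, hij⟩ := Fintype.exists_pair_of_one_lt_card hι
  (abs_nonneg _).trans (hs.abs_inner_le i j hij)

theorem abs_norm_sum_smul_sq_sub_le (hs : NearlyOrthogonal s ψ φ) (t : Finset ι) {c : ι → ℝ}
    (hc : ∀ i, 0 ≤ c i) :
    |‖∑ i ∈ t, c i • s i‖ ^ 2 - ∑ i ∈ t, c i ^ 2 * ‖s i‖ ^ 2| ≤
      φ * ((∑ i ∈ t, c i) ^ 2 - ∑ i ∈ t, c i ^ 2) := by
  classical
  have hdiag : ∀ i ∈ t, c i ^ 2 * ‖s i‖ ^ 2 =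
      ∑ j ∈ t, if i = j then c i * c j * ⟪s i, s j⟫ else 0 := fun i hi => by
    rw [sum_ite_eq, if_pos hi, real_inner_self_eq_norm_sq]; ring
  have hsq : ∀ i ∈ t, c i ^ 2 = ∑ j ∈ t, if i = j then c i * c j else 0 := fun i hi => by
    rw [sum_ite_eq, if_pos hi]; ring
  have hterm : ∀ i j, |c i * c j * ⟪s i, s j⟫ - if i = j then c i * c j * ⟪s i, s j⟫ else 0|
      ≤ φ * (c i * c j - if i = j then c i * c j else 0) := fun i j => by
    split_ifs with hij
    · simp
    · rw [sub_zero, sub_zero, abs_mul, abs_of_nonneg (mul_nonneg (hc i) (hc j)), mul_comm φ]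
      exact mul_le_mul_of_nonneg_left (hs.abs_inner_le i j hij) (mul_nonneg (hc i) (hc j))
  rw [norm_sum_smul_sq, sum_congr rfl hdiag, sum_congr rfl hsq, sq, sum_mul_sum, ← sum_sub_distrib,
    ← sum_sub_distrib, mul_sum]
  refine (abs_sum_le_sum_abs _ _).trans (sum_le_sum fun i _ => ?_)
  rw [← sum_sub_distrib, ← sum_sub_distrib, mul_sum]
  exact (abs_sum_le_sum_abs _ _).trans (sum_le_sum fun j _ => hterm i j)

theorem sq_sum_le_card_mul_norm_sum_smul_sq (hs : NearlyOrthogonal s ψ φ) (hψ : ψ ≤ 1) (hφ : 0 ≤ φ)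
    (t : Finset ι) {c : ι → ℝ} (hc : ∀ i, 0 ≤ c i) :
    (1 - ψ - #t * φ) * (∑ i ∈ t, c i) ^ 2 ≤ #t * ‖∑ i ∈ t, c i • s i‖ ^ 2 := by
  have hdiag : (1 - ψ) * ∑ i ∈ t, c i ^ 2 ≤ ∑ i ∈ t, c i ^ 2 * ‖s i‖ ^ 2 := by
    rw [mul_sum]
    exact sum_le_sum fun i _ => by
      rw [mul_comm]; exact mul_le_mul_of_nonneg_left (hs.norm_sq_mem i).1 (sq_nonneg _)
  have hcs := sq_sum_le_card_mul_sum_sq (s := t) (f := c)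
  have hgram := (abs_le.1 (hs.abs_norm_sum_smul_sq_sub_le t hc)).1
  nlinarith [mul_le_mul_of_nonneg_left hcs (by linarith : 0 ≤ 1 - ψ + φ)]

theorem card_le_mul_norm_sq (hs : NearlyOrthogonal s ψ φ) {t : Finset ι} (ht : t.Nonempty)
    {v : E} (hv : ∀ i ∈ t, 1 ≤ ⟪v, s i⟫) :
    (#t : ℝ) ≤ (1 + ψ + φ * (#t - 1)) * ‖v‖ ^ 2 := by
  set T := ∑ i ∈ t, s i
  have hT : ‖T‖ ^ 2 ≤ #t * (1 + ψ + φ * (#t - 1)) := by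
    have hgram :=
      (abs_le.1 (hs.abs_norm_sum_smul_sq_sub_le t (c := fun _ => 1) fun _ => zero_le_one)).2
    have hdiag : ∑ i ∈ t, ‖s i‖ ^ 2 ≤ #t * (1 + ψ) := by
      have := sum_le_sum fun i (_ : i ∈ t) => (hs.norm_sq_mem i).2
      rwa [sum_const, nsmul_eq_mul] at this
    simp only [one_smul, one_pow, one_mul, sum_const, nsmul_eq_mul, mul_one] at hgram
    nlinarith
  have hvT : (#t : ℝ) ≤ ⟪v, T⟫ := by
    rw [inner_sum]
    simpa using sum_le_sum hv
  have hcard : (0 : ℝ) < #t := by exact_mod_cast ht.card_pos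
  have hcs : (#t : ℝ) ^ 2 ≤ ‖v‖ ^ 2 * ‖T‖ ^ 2 := by
    rw [← mul_pow]
    exact pow_le_pow_left₀ hcard.le (hvT.trans (real_inner_le_norm _ _)) 2
  nlinarith [mul_le_mul_of_nonneg_left hT (sq_nonneg ‖v‖)]

end NearlyOrthogonal

theorem one_sub_mul_mul_le_of_sq_le {N n P m εd ε δ : ℝ} (hn0 : 0 ≤ n) (hm : 2 ≤ m) (hεd0 : 0 ≤ εd)
    (hεd : εd < 0.1) (hε : 0 ≤ ε) (hδ : 0 ≤ δ)
    (hmain : N ^ 2 ≤ P + ε * (N + n) + m * δ + 9 / 4 * m * εd)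
    (hNn : (1 - 3 / 4 * εd) * n ≤ N) (hn : m - 1 ≤ 1.125 * n ^ 2) :
    (1 - 7 * (εd + ε + δ)) * (N * n) ≤ P := by
  have hn1 : 0.9 ≤ n := by nlinarith
  have hNn' : 0.9 * n ≤ N := by nlinarith
  have hNn2 : (1 - 3 / 4 * εd) * (N * n) ≤ N ^ 2 := by nlinarith
  have hsum : N + n ≤ 2.5 * (N * n) := by nlinarith
  have hmNn : m ≤ 2.5 * (N * n) := by nlinarith
  nlinarith [mul_le_mul_of_nonneg_left hsum hε, mul_le_mul_of_nonneg_left hmNn hδ,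
    mul_le_mul_of_nonneg_left hmNn hεd0]

/-- An `(ε, δ)`-approximate KKT point of margin maximization, with the labels absorbed into the
points: `s i = y i • x i`. -/
structure IsApproxKKT_s1 [Fintype ι] (s : ι → E) (ε δ : ℝ) (w : E) (lam : ι → ℝ) : Prop where
  nonneg : ∀ i, 0 ≤ lam i
  norm_sub_sum_le : ‖w - ∑ i, lam i • s i‖ ≤ ε
  mul_inner_sub_one_le : ∀ i, lam i * (⟪w, s i⟫ - 1) ≤ δ
  one_le_inner : ∀ i, 1 ≤ ⟪w, s i⟫

namespace IsApproxKKT_s1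

variable [Fintype ι] {s : ι → E} {ε δ ψ φ : ℝ} {w : E} {lam : ι → ℝ}

theorem inner_sum_le (h : IsApproxKKT_s1 s ε δ w lam) (t : Finset ι) :
    ⟪w, ∑ i ∈ t, lam i • s i⟫ ≤ ∑ i ∈ t, lam i + #t * δ := by
  rw [inner_sum, ← nsmul_eq_mul, ← sum_const, ← sum_add_distrib]
  exact sum_le_sum fun i _ => by
    rw [real_inner_smul_right]; linarith [h.mul_inner_sub_one_le i]

theorem sum_le (h : IsApproxKKT_s1 s ε δ w lam) (hs : NearlyOrthogonal s ψ φ) (hψ : ψ ≤ 0.1)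
    (hm : 2 ≤ Fintype.card ι) (hmφ : Fintype.card ι * φ ≤ 0.025) (hε : ε ≤ 1 / 2)
    (hδ : δ ≤ 1 / 2) :
    ∑ i, lam i ≤ 3 * Fintype.card ι := by
  set m : ℝ := (Fintype.card ι : ℝ)
  set Λ := ∑ i, lam i
  set U := ∑ i, lam i • s i
  have hm' : (2 : ℝ) ≤ m := by simp only [m]; exact_mod_cast hm
  have hU : 0.875 * Λ ^ 2 ≤ m * (‖w‖ + ε) ^ 2 := by
    have hlow := hs.sq_sum_le_card_mul_norm_sum_smul_sq (by linarith) (hs.nonneg hm) univ h.nonneg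
    have hUw : ‖U‖ ≤ ‖w‖ + ε := by
      have := norm_sub_norm_le U w
      rw [norm_sub_rev] at this
      linarith [h.norm_sub_sum_le]
    rw [card_univ] at hlow
    nlinarith [pow_le_pow_left₀ (norm_nonneg U) hUw 2, sq_nonneg Λ]
  have hw : ‖w‖ ^ 2 ≤ Λ + m * δ + ε * ‖w‖ := by
    have := h.inner_sum_le univ
    rw [card_univ] at this
    linarith [norm_sq_le_inner_add_mul_norm h.norm_sub_sum_le]
  have hε0 : 0 ≤ ε := (norm_nonneg _).trans h.norm_sub_sum_le
  -- If `Λ > 3 m`, the two bounds force `‖w‖ ≤ 2` and then `Λ < 6 ≤ 3 m`.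
  by_contra! hΛ
  have hV : (‖w‖ + ε) ^ 2 ≤ (‖w‖ + 1 / 2) ^ 2 := by gcongr
  have hw' : ‖w‖ ^ 2 ≤ 7 / 6 * Λ + ‖w‖ / 2 := by
    nlinarith [mul_le_mul_of_nonneg_left hδ (by linarith : 0 ≤ m),
      mul_le_mul_of_nonneg_right hε (norm_nonneg w)]
  have hΛV : 2.625 * Λ ≤ (‖w‖ + ε) ^ 2 := by nlinarith [sq_nonneg (‖w‖ + ε)]
  have hw2 : ‖w‖ ≤ 2 := by nlinarith
  nlinarith

theorem slack_nonneg [Nonempty ι] (h : IsApproxKKT_s1 s ε δ w lam) : 0 ≤ δ :=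
  let i := Classical.arbitrary ι
  (mul_nonneg (h.nonneg i) (sub_nonneg.2 (h.one_le_inner i))).trans (h.mul_inner_sub_one_le i)

theorem one_sub_mul_le_inner_sub_smul (h : IsApproxKKT_s1 s ε δ w lam) (hs : NearlyOrthogonal s ψ φ)
    {i l : ι} (hil : i ≠ l) : 1 - lam l * φ ≤ ⟪w - lam l • s l, s i⟫ := by
  have hli := (abs_le.1 (hs.abs_inner_le l i hil.symm)).2
  rw [inner_sub_left, real_inner_smul_left]
  nlinarith [h.one_le_inner i, mul_le_mul_of_nonneg_left hli (h.nonneg l)]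

theorem norm_sub_smul_sq_le (h : IsApproxKKT_s1 s ε δ w lam) (hs : NearlyOrthogonal s ψ φ)
    (hφ : 0 ≤ φ) (l : ι) {v : E} (hv : ∀ i, i ≠ l → 1 ≤ ⟪v, s i⟫) :
    ‖w - lam l • s l‖ ^ 2 ≤ ⟪w - lam l • s l, v⟫ + ε * (‖w - lam l • s l‖ + ‖v‖) +
      Fintype.card ι * δ + φ * (∑ i, lam i) ^ 2 := by
  classical
  set t := univ.erase l
  set u := ∑ i ∈ t, lam i • s i
  set Λ := ∑ i, lam i
  set Λ' := ∑ i ∈ t, lam i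
  have hdist : ‖w - lam l • s l - u‖ ≤ ε := by
    have hsplit : w - lam l • s l - u = w - ∑ i, lam i • s i := by
      rw [← add_sum_erase univ _ (mem_univ l)]; abel
    exact hsplit ▸ h.norm_sub_sum_le
  have hcross : -(φ * Λ') ≤ ⟪s l, u⟫ := by
    rw [inner_sum, mul_sum, ← sum_neg_distrib]
    refine sum_le_sum fun i hi => ?_
    have := (abs_le.1 (hs.abs_inner_le l i (ne_of_mem_erase hi).symm)).1
    rw [real_inner_smul_right]
    nlinarith [h.nonneg i]
  have hwu : ⟪w - lam l • s l, u⟫ ≤ Λ' + #t * δ + lam l * (φ * Λ') := by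
    rw [inner_sub_left, real_inner_smul_left]
    nlinarith [h.inner_sum_le t, h.nonneg l]
  have huv : Λ' ≤ ⟪u, v⟫ := by
    rw [sum_inner]
    refine sum_le_sum fun i hi => ?_
    rw [real_inner_smul_left, real_inner_comm]
    nlinarith [hv i (ne_of_mem_erase hi), h.nonneg i]
  have hvu : ⟪u, v⟫ ≤ ⟪w - lam l • s l, v⟫ + ε * ‖v‖ := by
    have hdist' : ‖u - (w - lam l • s l)‖ ≤ ε := by rwa [norm_sub_rev]
    have := (real_inner_le_norm _ v).trans (mul_le_mul_of_nonneg_right hdist' (norm_nonneg v))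
    rw [inner_sub_left] at this
    linarith
  have hcross' : lam l * (φ * Λ') ≤ φ * Λ ^ 2 := by
    have hlΛ : lam l ≤ Λ := single_le_sum (fun i _ => h.nonneg i) (mem_univ l)
    have hΛ'Λ : Λ' ≤ Λ := sum_le_sum_of_subset_of_nonneg (subset_univ t) fun i _ _ => h.nonneg i
    have hΛ'0 : 0 ≤ Λ' := sum_nonneg fun i _ => h.nonneg i
    rw [sq, mul_left_comm]
    exact mul_le_mul_of_nonneg_left (mul_le_mul hlΛ hΛ'Λ hΛ'0 (hlΛ.trans' (h.nonneg l))) hφ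
  have hcard : (#t : ℝ) * δ ≤ Fintype.card ι * δ := by
    have : Nonempty ι := ⟨l⟩
    gcongr
    · exact h.slack_nonneg
    · exact card_le_univ t
  nlinarith [norm_sq_le_inner_add_mul_norm hdist]

theorem one_sub_mul_mul_le_inner_sub_smul (h : IsApproxKKT_s1 s ε δ w lam)
    (hs : NearlyOrthogonal s ψ φ) (hψ : ψ ≤ 0.1) (hm : 2 ≤ Fintype.card ι) {εd : ℝ}
    (hφ : 4 * Fintype.card ι * φ ≤ εd) (hεd : εd < 0.1) (hε : ε ≤ 1 / 2) (hδ : δ ≤ 1 / 2)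
    (l : ι) {wstar : E} (hfeas : ∀ i, i ≠ l → 1 ≤ ⟪wstar, s i⟫)
    (hopt : ∀ v, (∀ i, i ≠ l → 1 ≤ ⟪v, s i⟫) → ‖wstar‖ ≤ ‖v‖) :
    (1 - 7 * (εd + ε + δ)) * (‖w - lam l • s l‖ * ‖wstar‖) ≤ ⟪w - lam l • s l, wstar⟫ := by
  classical
  have hm' : (2 : ℝ) ≤ Fintype.card ι := by exact_mod_cast hm
  have hφ0 := hs.nonneg hm
  have hΛ := h.sum_le hs hψ hm (by linarith) hε hδ
  have hlΛ : lam l ≤ ∑ i, lam i := single_le_sum (fun i _ => h.nonneg i) (mem_univ l)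
  have hκ : 1 - 3 / 4 * εd ≤ 1 - lam l * φ := by nlinarith
  have hnorm : (1 - 3 / 4 * εd) * ‖wstar‖ ≤ ‖w - lam l • s l‖ :=
    mul_norm_le_of_forall_norm_le (S := {l}ᶜ) hopt (by linarith)
      fun i hi => hκ.trans (h.one_sub_mul_le_inner_sub_smul hs hi)
  have hmargin : (Fintype.card ι : ℝ) - 1 ≤ 1.125 * ‖wstar‖ ^ 2 := by
    have ht : (univ.erase l).Nonempty := by
      rw [← card_pos, card_erase_of_mem (mem_univ l), card_univ]; omega
    have := hs.card_le_mul_norm_sq ht fun i hi => hfeas i (ne_of_mem_erase hi)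
    rw [card_erase_of_mem (mem_univ l), card_univ, Nat.cast_sub (by omega), Nat.cast_one] at this
    nlinarith [sq_nonneg ‖wstar‖]
  have hcross : φ * (∑ i, lam i) ^ 2 ≤ 9 / 4 * Fintype.card ι * εd := by
    have hΛsq := pow_le_pow_left₀ (sum_nonneg fun i _ => h.nonneg i) hΛ 2
    nlinarith [mul_le_mul_of_nonneg_left hΛsq hφ0]
  have hεd0 : 0 ≤ εd := hφ0.trans (by nlinarith)
  have : Nonempty ι := ⟨l⟩
  exact one_sub_mul_mul_le_of_sq_le (norm_nonneg _) hm' hεd0 hεd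
    ((norm_nonneg _).trans h.norm_sub_sum_le) h.slack_nonneg
    (by linarith [h.norm_sub_smul_sq_le hs hφ0 l hfeas]) hnorm hmargin

end IsApproxKKT_s1

/-- There is a universal constant `C > 0` such that for any linear
approximate-KKT predictor `w` on a nearly-orthogonal dataset, the gradient-ascent unlearned
predictor `ŵ = w - λ_l y_l x_l` has cosine similarity at least
`1 - C (√εd + √ε₁ + √δ₁)` with the max-margin predictor `w*` of the retained dataset. -/
theorem stmt_1 :
    ∃ C : ℝ, 0 < C ∧
      ∀ (d m : ℕ), 2 ≤ m →
      ∀ (ε₁ δ₁ εd ψ φ : ℝ),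
        0 < ε₁ → ε₁ ≤ 0.5 → 0 < δ₁ → δ₁ ≤ 0.5 → 0 < εd → εd < 0.1 →
        ψ ≤ 0.1 → φ ≤ εd / (4 * m) →
      ∀ (x : Fin m → EuclideanSpace ℝ (Fin d)) (y : Fin m → ℝ),
        (∀ i, y i = 1 ∨ y i = -1) →
        (∀ i, 1 - ψ ≤ ‖x i‖ ^ 2 ∧ ‖x i‖ ^ 2 ≤ 1 + ψ) →
        (∀ i j, i ≠ j → |(inner ℝ (x i) (x j) : ℝ)| ≤ φ) →
      ∀ (w : EuclideanSpace ℝ (Fin d)) (lam : Fin m → ℝ),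
        (∀ i, 0 ≤ lam i) →
        ‖w - ∑ i, (lam i * y i) • x i‖ ≤ ε₁ →
        (∀ i, lam i * (y i * (inner ℝ w (x i) : ℝ) - 1) ≤ δ₁) →
        (∀ i, 1 ≤ y i * (inner ℝ w (x i) : ℝ)) →
      ∀ l : Fin m,
      ∀ wstar : EuclideanSpace ℝ (Fin d),
        (∀ i, i ≠ l → 1 ≤ y i * (inner ℝ wstar (x i) : ℝ)) →
        (∀ v : EuclideanSpace ℝ (Fin d),
          (∀ i, i ≠ l → 1 ≤ y i * (inner ℝ v (x i) : ℝ)) →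
          (1 / 2) * ‖wstar‖ ^ 2 ≤ (1 / 2) * ‖v‖ ^ 2) →
        (1 - C * (Real.sqrt εd + Real.sqrt ε₁ + Real.sqrt δ₁)) *
            (‖w - (lam l * y l) • x l‖ * ‖wstar‖) ≤
          (inner ℝ (w - (lam l * y l) • x l) wstar : ℝ) := by
  refine ⟨7, by norm_num, ?_⟩
  intro d m hm ε₁ δ₁ εd ψ φ hε₁ hε₁' hδ₁ hδ₁' hεd hεd' hψ hφ x y hy hxn hxij w lam
    hlam hstat hcomp hfeas l wstar hwfeas hwopt
  set s : Fin m → EuclideanSpace ℝ (Fin d) := fun i => y i • x i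
  have hinner : ∀ v i, ⟪v, s i⟫ = y i * ⟪v, x i⟫ := fun v i => real_inner_smul_right _ _ _
  have hs : NearlyOrthogonal s ψ φ := NearlyOrthogonal.smul_of_abs_eq_one ⟨hxn, hxij⟩
    fun i => by rcases hy i with h | h <;> simp [h]
  have hkkt : IsApproxKKT_s1 s ε₁ δ₁ w lam :=
    ⟨hlam, by simpa [s, mul_smul] using hstat, by simpa [hinner] using hcomp,
      by simpa [hinner] using hfeas⟩
  have hopt : ∀ v, (∀ i, i ≠ l → 1 ≤ ⟪v, s i⟫) → ‖wstar‖ ≤ ‖v‖ := fun v hv => by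
    have := hwopt v (by simpa [hinner] using hv)
    nlinarith [norm_nonneg wstar, norm_nonneg v]
  have hsqrt : εd + ε₁ + δ₁ ≤ √εd + √ε₁ + √δ₁ := by
    gcongr <;> rw [Real.le_sqrt_self_iff] <;> linarith
  have key := hkkt.one_sub_mul_mul_le_inner_sub_smul hs hψ (by simpa using hm)
    (by rw [Fintype.card_fin]; rwa [le_div_iff₀ (by positivity), mul_comm] at hφ) hεd'
    (by linarith) (by linarith) l (by simpa [hinner] using hwfeas) hopt
  rw [mul_smul]
  refine le_trans ?_ key
  gcongr
end

section
/- Let d, m, k ∈ ℕ with 1 ≤ k < m, let 0 < ε₁ ≤ 0.5, 0 < δ₁ ≤ 0.5 and 0 < ε_d < 0.1. Let S = {(x_1,y_1),…,(x_m,y_m)} ⊆ ℝ^d × {−1,1} satisfy Assumption(ψ, φ) with ψ ≤ 0.1 and φ ≤ ε_d/(4m). Suppose w ∈ ℝ^d is an (ε₁, δ₁)-approximate KKT point of the margin-maximization problem w.r.t. S with multipliers λ_1,…,λ_m. Let F ⊆ [m] be a forget set with |F| = k and set ŵ = w − Σ_{l∈F} λ_l y_l x_l. Then the rescaled vector (1/(1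 − 0.6·k·ε_d/m))·ŵ is an (ε₁ + ε₁ε_d/(m/k − ε_d), δ₁ + δ₁ε_d/(m/k − ε_d) + 7.2·k·ε_d/m)-approximate KKT point of the margin-maximization problem w.r.t. the retained dataset {(x_i, y_i) : i ∈ [m] \ F}, with multipliers λ_i/(1 − 0.6·k·ε_d/m) for i ∈ [m] \ F. -/
/-!
The multiplier of the point with the largest `λ` is at most `2.1`: near-orthogonality makes its
margin at least about `0.875 λ - 0.525`, and complementary slackness with `δ ≤ 0.5` then caps
`λ`. Hence the forgotten points `F` move each retained margin by at most
`2.1 k φ ≤ 0.525 k εd / m`. Subtracting their contribution from `w` leaves the stationarity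
residual unchanged, and rescaling by `1 / (1 - 0.6 k εd / m)` restores primal feasibility at the
price of the stated loss in `ε` and `δ`.
-/

open Finset
open scoped RealInnerProductSpace

section

variable {E ι : Type*} [NormedAddCommGroup E] [InnerProductSpace ℝ E]

structure IsApproxKKTPoint (s : Finset ι) (x : ι → E) (y : ι → ℝ) (w : E) (lam : ι → ℝ)
    (ε δ : ℝ) : Prop where
  nonneg : ∀ i ∈ s, 0 ≤ lam i
  stationary : ‖w - ∑ i ∈ s, (lam i * y i) • x i‖ ≤ ε
  slack : ∀ i ∈ s, lam i * (y i * ⟪w, x i⟫ - 1) ≤ δ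
  feasible : ∀ i ∈ s, 1 ≤ y i * ⟪w, x i⟫

variable {s T : Finset ι} {x : ι → E} {y lam : ι → ℝ} {w : E} {ε δ : ℝ}

lemma abs_inner_sum_smul_le {v : E} {Λ φ : ℝ} (hy : ∀ i ∈ T, |y i| = 1)
    (hlam : ∀ i ∈ T, 0 ≤ lam i ∧ lam i ≤ Λ) (hφ : ∀ i ∈ T, |⟪x i, v⟫| ≤ φ) :
    |⟪∑ i ∈ T, (lam i * y i) • x i, v⟫| ≤ T.card * (Λ * φ) := by
  rw [sum_inner, ← nsmul_eq_mul]
  refine (abs_sum_le_sum_abs _ _).trans (sum_le_card_nsmul _ _ _ fun i hi => ?_)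
  obtain ⟨hl0, hlΛ⟩ := hlam i hi
  rw [real_inner_smul_left, abs_mul, abs_mul, hy i hi, mul_one, abs_of_nonneg hl0]
  exact mul_le_mul hlΛ (hφ i hi) (abs_nonneg _) (hl0.trans hlΛ)

lemma le_margin_of_stationary [DecidableEq ι]
    (hstat : ‖w - ∑ i ∈ s, (lam i * y i) • x i‖ ≤ ε) {j : ι} (hj : j ∈ s) (hyj : |y j| = 1) :
    lam j * ‖x j‖ ^ 2 - |⟪∑ i ∈ s.erase j, (lam i * y i) • x i, x j⟫| - ε * ‖x j‖ ≤
      y j * ⟪w, x j⟫ := by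
  set r := w - ∑ i ∈ s, (lam i * y i) • x i
  have hw : w = r + (lam j * y j) • x j + ∑ i ∈ s.erase j, (lam i * y i) • x i := by
    rw [add_assoc, add_sum_erase s (fun i => (lam i * y i) • x i) hj, sub_add_cancel]
  have hyy : y j * y j = 1 := by rw [← abs_mul_abs_self, hyj, one_mul]
  have hr : |y j * ⟪r, x j⟫| ≤ ε * ‖x j‖ := by
    rw [abs_mul, hyj, one_mul]
    exact (abs_real_inner_le_norm _ _).trans (mul_le_mul_of_nonneg_right hstat (norm_nonneg _))
  have hc : |y j * ⟪∑ i ∈ s.erase j, (lam i * y i) • x i, x j⟫| ≤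
      |⟪∑ i ∈ s.erase j, (lam i * y i) • x i, x j⟫| := by
    rw [abs_mul, hyj, one_mul]
  have hexp : y j * ⟪w, x j⟫ = y j * ⟪r, x j⟫ + lam j * (y j * y j) * ‖x j‖ ^ 2 +
      y j * ⟪∑ i ∈ s.erase j, (lam i * y i) • x i, x j⟫ := by
    conv_lhs => rw [hw]
    rw [inner_add_left, inner_add_left, real_inner_smul_left, real_inner_self_eq_norm_sq]
    ring
  rw [hexp, hyy]
  linarith [neg_abs_le (y j * ⟪r, x j⟫),
    neg_abs_le (y j * ⟪∑ i ∈ s.erase j, (lam i * y i) • x i, x j⟫)]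

namespace IsApproxKKTPoint

theorem multiplier_le [DecidableEq ι] {ψ φ : ℝ} (h : IsApproxKKTPoint s x y w lam ε δ)
    (hε : ε ≤ 0.5) (hδ : δ ≤ 0.5) (hy : ∀ i ∈ s, |y i| = 1) (hψ : ψ ≤ 0.1)
    (hnorm : ∀ i ∈ s, 1 - ψ ≤ ‖x i‖ ^ 2 ∧ ‖x i‖ ^ 2 ≤ 1 + ψ)
    (hortho : ∀ i ∈ s, ∀ j ∈ s, i ≠ j → |⟪x i, x j⟫| ≤ φ) (hφ : φ * (s.card - 1) ≤ 0.025)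
    {i : ι} (hi : i ∈ s) : lam i ≤ 2.1 := by
  obtain ⟨j, hj, hmax⟩ := s.exists_max_image lam ⟨i, hi⟩
  have hcross : |⟪∑ l ∈ s.erase j, (lam l * y l) • x l, x j⟫| ≤ 0.025 * lam j := by
    refine (abs_inner_sum_smul_le (Λ := lam j) (fun l hl => hy l (mem_of_mem_erase hl))
      (fun l hl => ⟨h.nonneg l (mem_of_mem_erase hl), hmax l (mem_of_mem_erase hl)⟩)
      (fun l hl => hortho l (mem_of_mem_erase hl) j hj (ne_of_mem_erase hl))).trans ?_
    rw [card_erase_of_mem hj, Nat.cast_pred (card_pos.2 ⟨j, hj⟩)]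
    nlinarith [h.nonneg j hj]
  have hmargin := le_margin_of_stationary h.stationary hj (hy j hj)
  have hxj : ‖x j‖ ≤ 1.05 := by nlinarith [(hnorm j hj).2, norm_nonneg (x j)]
  have hε0 : 0 ≤ ε := (norm_nonneg _).trans h.stationary
  have hlow : 0.875 * lam j - 1.525 ≤ y j * ⟪w, x j⟫ - 1 := by
    nlinarith [(hnorm j hj).1, h.nonneg j hj]
  have hquad : lam j * (0.875 * lam j - 1.525) ≤ 0.5 :=
    (mul_le_mul_of_nonneg_left hlow (h.nonneg j hj)).trans ((h.slack j hj).trans hδ)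
  nlinarith [hmax i hi, h.nonneg j hj]

theorem sdiff_smul [DecidableEq ι] (h : IsApproxKKTPoint s x y w lam ε δ) {F : Finset ι}
    (hF : F ⊆ s) {c β Λ : ℝ} (hc : 0 < c) (hβ : β ≤ 1 - c) (hΛ : ∀ i ∈ s \ F, lam i ≤ Λ)
    (hcross : ∀ i ∈ s \ F, |y i * ⟪∑ l ∈ F, (lam l * y l) • x l, x i⟫| ≤ β) :
    IsApproxKKTPoint (s \ F) x y ((1 / c) • (w - ∑ l ∈ F, (lam l * y l) • x l))
      (fun i => lam i / c) (ε / c) ((δ + Λ * (1 - c + β)) / c ^ 2) := by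
  have hmargin : ∀ i, y i * ⟪(1 / c) • (w - ∑ l ∈ F, (lam l * y l) • x l), x i⟫ =
      (y i * ⟪w, x i⟫ - y i * ⟪∑ l ∈ F, (lam l * y l) • x l, x i⟫) / c := by
    intro i
    rw [real_inner_smul_left, inner_sub_left]
    ring
  refine ⟨fun i hi => div_nonneg (h.nonneg i (mem_sdiff.1 hi).1) hc.le, ?_, fun i hi => ?_,
    fun i hi => ?_⟩
  · have hres : (1 / c) • (w - ∑ l ∈ F, (lam l * y l) • x l) -
        ∑ i ∈ s \ F, (lam i / c * y i) • x i = (1 / c) • (w - ∑ i ∈ s, (lam i * y i) • x i) := by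
      have hterm : ∀ i, (lam i / c * y i) • x i = (1 / c) • ((lam i * y i) • x i) := fun i => by
        rw [smul_smul, div_eq_inv_mul, one_div, mul_assoc]
      rw [sum_congr rfl fun i _ => hterm i, ← smul_sum, ← smul_sub, ← sum_sdiff hF]
      congr 1
      abel
    rw [hres, norm_smul, Real.norm_of_nonneg (by positivity), one_div_mul_eq_div]
    exact div_le_div_of_nonneg_right h.stationary hc.le
  · obtain ⟨his, -⟩ := mem_sdiff.1 hi
    have hb := abs_le.1 (hcross i hi)
    have hl := h.nonneg i his
    have hnum : lam i * (y i * ⟪w, x i⟫ - y i * ⟪∑ l ∈ F, (lam l * y l) • x l, x i⟫ - c) ≤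
        δ + Λ * (1 - c + β) := by
      nlinarith [h.slack i his, hΛ i hi]
    rw [hmargin]
    calc lam i / c * ((y i * ⟪w, x i⟫ - y i * ⟪∑ l ∈ F, (lam l * y l) • x l, x i⟫) / c - 1)
        = lam i * (y i * ⟪w, x i⟫ - y i * ⟪∑ l ∈ F, (lam l * y l) • x l, x i⟫ - c) / c ^ 2 := by
          field_simp
      _ ≤ (δ + Λ * (1 - c + β)) / c ^ 2 := div_le_div_of_nonneg_right hnum (by positivity)
  · rw [hmargin, le_div_iff₀ hc, one_mul]
    linarith [h.feasible i (mem_sdiff.1 hi).1, (abs_le.1 (hcross i hi)).2]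

end IsApproxKKTPoint

end

lemma add_mul_div_div_sub_eq {a b k m : ℝ} (hk : k ≠ 0) (hm : m ≠ 0) (hkm : k * b ≠ m) :
    a + a * b / (m / k - b) = a / (1 - k * b / m) := by
  have hmkb : m - k * b ≠ 0 := sub_ne_zero.2 (Ne.symm hkm)
  have e1 : m / k - b = (m - k * b) / k := by field_simp
  have e2 : 1 - k * b / m = (m - k * b) / m := by field_simp
  rw [e1, e2, div_div_eq_mul_div, div_div_eq_mul_div, eq_div_iff hmkb, add_mul,
    div_mul_cancel₀ _ hmkb]
  ring

lemma slack_bound_of_unlearning {δ e : ℝ} (hδ : δ ≤ 0.5) (he0 : 0 ≤ e) (he : e ≤ 0.1) :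
    (δ + 2.1 * (1 - (1 - 0.6 * e) + 0.525 * e)) / (1 - 0.6 * e) ^ 2 ≤ δ / (1 - e) + 7.2 * e := by
  have hc : 0 < 1 - 0.6 * e := by linarith
  have hd : 0 < 1 - e := by linarith
  rw [div_add' _ _ _ hd.ne', div_le_div_iff₀ (by positivity) hd]
  have he2 : 0 ≤ e * e := mul_nonneg he0 he0
  nlinarith [mul_nonneg (sub_nonneg.2 hδ) (mul_nonneg he0 (by linarith : (0 : ℝ) ≤ 0.2 - 0.36 * e)),
    mul_nonneg he0 hd.le, mul_nonneg he2 hd.le, mul_nonneg he2 he0]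

theorem stmt_5_general
    (d m k : ℕ) (hk : 1 ≤ k) (hkm : k < m)
    (ε₁ δ₁ εd ψ φ : ℝ)
    (hε₁le : ε₁ ≤ 0.5)
    (hδ₁le : δ₁ ≤ 0.5)
    (hεdpos : 0 < εd) (hεdlt : εd < 0.1)
    (hψ : ψ ≤ 0.1) (hφ : φ ≤ εd / (4 * m))
    (x : Fin m → EuclideanSpace ℝ (Fin d)) (y : Fin m → ℝ)
    (hy : ∀ i, y i = 1 ∨ y i = -1)
    (hnorm : ∀ i, 1 - ψ ≤ ‖x i‖ ^ 2 ∧ ‖x i‖ ^ 2 ≤ 1 + ψ)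
    (hortho : ∀ i j, i ≠ j → |(inner ℝ (x i) (x j) : ℝ)| ≤ φ)
    (w : EuclideanSpace ℝ (Fin d)) (lam : Fin m → ℝ)
    (hlam : ∀ i, 0 ≤ lam i)
    (hstat : ‖w - ∑ i, (lam i * y i) • x i‖ ≤ ε₁)
    (hcs : ∀ i, lam i * (y i * (inner ℝ w (x i) : ℝ) - 1) ≤ δ₁)
    (hpf : ∀ i, 1 ≤ y i * (inner ℝ w (x i) : ℝ))
    (F : Finset (Fin m)) (hF : F.card = k) :
    (∀ i, i ∉ F → 0 ≤ lam i / (1 - 0.6 * k * εd / m)) ∧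
    ‖(1 / (1 - 0.6 * k * εd / m)) • (w - ∑ l ∈ F, (lam l * y l) • x l) -
        ∑ i ∈ Fᶜ, ((lam i / (1 - 0.6 * k * εd / m)) * y i) • x i‖ ≤
      ε₁ + ε₁ * εd / ((m : ℝ) / k - εd) ∧
    (∀ i, i ∉ F →
      (lam i / (1 - 0.6 * k * εd / m)) *
          (y i * (inner ℝ ((1 / (1 - 0.6 * k * εd / m)) •
              (w - ∑ l ∈ F, (lam l * y l) • x l)) (x i) : ℝ) - 1) ≤
        δ₁ + δ₁ * εd / ((m : ℝ) / k - εd) + 7.2 * k * εd / m) ∧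
    (∀ i, i ∉ F →
      1 ≤ y i * (inner ℝ ((1 / (1 - 0.6 * k * εd / m)) •
          (w - ∑ l ∈ F, (lam l * y l) • x l)) (x i) : ℝ)) := by
  have hkR : (0 : ℝ) < k := by exact_mod_cast hk
  have hkmR : (k : ℝ) + 1 ≤ m := by exact_mod_cast hkm
  have hy1 : ∀ i, |y i| = 1 := fun i => by rcases hy i with h | h <;> simp [h]
  have hKKT : IsApproxKKTPoint univ x y w lam ε₁ δ₁ :=
    ⟨fun i _ => hlam i, hstat, fun i _ => hcs i, fun i _ => hpf i⟩
  have hmR : (0 : ℝ) < m := by linarith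
  have hφm : φ * ((univ : Finset (Fin m)).card - 1) ≤ 0.025 := by
    rw [le_div_iff₀ (by positivity)] at hφ
    rw [card_univ, Fintype.card_fin]
    nlinarith
  have hlam_le : ∀ i, lam i ≤ 2.1 := fun i =>
    hKKT.multiplier_le hε₁le hδ₁le (fun i _ => hy1 i) hψ (fun i _ => hnorm i)
      (fun i _ j _ hij => hortho i j hij) hφm (mem_univ i)
  rw [show (0.6 : ℝ) * k * εd / m = 0.6 * (k * εd / m) by ring,
    show (7.2 : ℝ) * k * εd / m = 7.2 * (k * εd / m) by ring,
    add_mul_div_div_sub_eq hkR.ne' (by positivity) (by nlinarith),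
    add_mul_div_div_sub_eq hkR.ne' (by positivity) (by nlinarith)]
  set e : ℝ := k * εd / m with he
  have he0 : 0 ≤ e := by positivity
  have he1 : e ≤ 0.1 := by rw [he, div_le_iff₀ (by positivity)]; nlinarith
  have hcross : ∀ i ∈ univ \ F, |y i * ⟪∑ l ∈ F, (lam l * y l) • x l, x i⟫| ≤ 0.525 * e := by
    intro i hi
    rw [abs_mul, hy1 i, one_mul]
    refine (abs_inner_sum_smul_le (fun l _ => hy1 l) (fun l _ => ⟨hlam l, hlam_le l⟩)
      (fun l hl => hortho l i (by rintro rfl; exact (mem_sdiff.1 hi).2 hl))).trans ?_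
    calc (#F : ℝ) * (2.1 * φ) ≤ k * (2.1 * (εd / (4 * m))) := by rw [hF]; gcongr
      _ = 0.525 * e := by rw [he]; ring
  have hU := hKKT.sdiff_smul (subset_univ F) (c := 1 - 0.6 * e) (β := 0.525 * e)
    (by linarith) (by linarith) (fun i _ => hlam_le i) hcross
  rw [← compl_eq_univ_sdiff] at hU
  refine ⟨fun i hi => hU.nonneg i (mem_compl.2 hi), hU.stationary.trans ?_,
    fun i hi => (hU.slack i (mem_compl.2 hi)).trans ?_, fun i hi => hU.feasible i (mem_compl.2 hi)⟩
  · exact div_le_div_of_nonneg_left ((norm_nonneg _).trans hstat) (by linarith) (by linarith)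
  · exact slack_bound_of_unlearning hδ₁le he0 he1

/-- Batch unlearning of a forget set `F` of size `k` from a linear predictor:
the rescaled vector `(1/(1 - 0.6 k εd/m)) • (w - Σ_{l∈F} λ_l y_l x_l)` is an approximate KKT
point of the margin-maximization problem w.r.t. the retained dataset `{(x_i,y_i) : i ∉ F}`
with multipliers `λ_i / (1 - 0.6 k εd/m)`. -/
theorem stmt_5
    (d m k : ℕ) (hk : 1 ≤ k) (hkm : k < m)
    (ε₁ δ₁ εd ψ φ : ℝ)
    (hε₁pos : 0 < ε₁) (hε₁le : ε₁ ≤ 0.5)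
    (hδ₁pos : 0 < δ₁) (hδ₁le : δ₁ ≤ 0.5)
    (hεdpos : 0 < εd) (hεdlt : εd < 0.1)
    (hψ : ψ ≤ 0.1) (hφ : φ ≤ εd / (4 * m))
    (x : Fin m → EuclideanSpace ℝ (Fin d)) (y : Fin m → ℝ)
    (hy : ∀ i, y i = 1 ∨ y i = -1)
    (hnorm : ∀ i, 1 - ψ ≤ ‖x i‖ ^ 2 ∧ ‖x i‖ ^ 2 ≤ 1 + ψ)
    (hortho : ∀ i j, i ≠ j → |(inner ℝ (x i) (x j) : ℝ)| ≤ φ)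
    (w : EuclideanSpace ℝ (Fin d)) (lam : Fin m → ℝ)
    (hlam : ∀ i, 0 ≤ lam i)
    (hstat : ‖w - ∑ i, (lam i * y i) • x i‖ ≤ ε₁)
    (hcs : ∀ i, lam i * (y i * (inner ℝ w (x i) : ℝ) - 1) ≤ δ₁)
    (hpf : ∀ i, 1 ≤ y i * (inner ℝ w (x i) : ℝ))
    (F : Finset (Fin m)) (hF : F.card = k) :
    (∀ i, i ∉ F → 0 ≤ lam i / (1 - 0.6 * k * εd / m)) ∧
    ‖(1 / (1 - 0.6 * k * εd / m)) • (w - ∑ l ∈ F, (lam l * y l) • x l) -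
        ∑ i ∈ Fᶜ, ((lam i / (1 - 0.6 * k * εd / m)) * y i) • x i‖ ≤
      ε₁ + ε₁ * εd / ((m : ℝ) / k - εd) ∧
    (∀ i, i ∉ F →
      (lam i / (1 - 0.6 * k * εd / m)) *
          (y i * (inner ℝ ((1 / (1 - 0.6 * k * εd / m)) •
              (w - ∑ l ∈ F, (lam l * y l) • x l)) (x i) : ℝ) - 1) ≤
        δ₁ + δ₁ * εd / ((m : ℝ) / k - εd) + 7.2 * k * εd / m) ∧
    (∀ i, i ∉ F →
      1 ≤ y i * (inner ℝ ((1 / (1 - 0.6 * k * εd / m)) •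
          (w - ∑ l ∈ F, (lam l * y l) • x l)) (x i) : ℝ)) :=
  stmt_5_general d m k hk hkm ε₁ δ₁ εd ψ φ hε₁le hδ₁le hεdpos hεdlt hψ hφ x y hy hnorm hortho w lam
    hlam hstat hcs hpf F hF
end

section
/- There exists a universal constant C > 0 such that the following holds for all d, m ∈ ℕ with m ≥ 2, all 0 < ε₁ ≤ 0.5, 0 < δ₁ ≤ 0.5, 0 < ε_d < 0.1, every dataset S = {(x_1,y_1),…,(x_m,y_m)} ⊆ ℝ^d × {−1,1} satisfying Assumption(ψ, φ) with ψ ≤ 0.1 and φ ≤ ε_d/(4m), and every (ε₁, δ₁)-approximate KKT point w of the margin-maximization problem w.r.t. S with multipliers λ_1,…,λ_m: for every l ∈ [m], every 0 < ε̃ ≤ 0.5, 0 < δ̃ ≤ 0.5, and every w̃ ∈ ℝ^d that is an (ε̃, δ̃)-approximate KKT point of the margin-maximization problem w.r.t. S \ {(x_l, y_l)}, one has ⟨w, w̃⟩ ≤ (1 − C/m + C(ε_d + ε₁ + ε̃))·‖w‖·‖w̃‖. (In particular, keeping the original predictor unchanged is not a successful unlearning algorithm.) -/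
/-!
Both predictors are, up to their slack ε, nonnegative combinations of nearly orthogonal samples
whose multipliers are bounded by a constant, so all their margins are of order one. The functionals
`a = y_l x_l` and `u = ∑_{j ≠ l} y_j x_j` tell them apart: `w` has margin at least `1` on `a` while
`w̃`, which never saw `x_l`, has margin `O(ε̃)` there, and both have `⟪·, u⟫ ≈ m - 1`. Hence the
determinant `⟪w, a⟫⟪w̃, u⟫ - ⟪w̃, a⟫⟪w, u⟫` is of order `m`. For `z = ‖w̃‖ w - ‖w‖ w̃` it is also at
most `‖z‖ · O(m) / ‖w‖`, so `‖z‖ ≳ ‖w‖`; as `‖z‖² = 2‖w‖‖w̃‖(‖w‖‖w̃‖ - ⟪w, w̃⟫)` and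
`‖w̃‖² = O(m)`, the cosine of `w` and `w̃` is at most `1 - c/m`. When `ε_d + ε₁ + ε̃ ≥ 1/m` the bound
is just Cauchy–Schwarz.
-/
open Finset RealInnerProductSpace

variable {ι E : Type*} [NormedAddCommGroup E] [InnerProductSpace ℝ E]

section Geometry

variable {w w' a u : E}

theorem norm_smul_sub_smul_sq (w w' : E) :
    ‖‖w'‖ • w - ‖w‖ • w'‖ ^ 2 = 2 * ‖w‖ * ‖w'‖ * (‖w‖ * ‖w'‖ - ⟪w, w'⟫) := by
  rw [norm_sub_sq_real, norm_smul, norm_smul, real_inner_smul_left, real_inner_smul_right,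
    norm_norm, norm_norm]
  ring

theorem mul_norm_le_norm_smul_sub_smul {c K : ℝ} (hK : 0 < K)
    (hK_ge : |⟪w, u⟫| * ‖a‖ + |⟪w, a⟫| * ‖u‖ ≤ K)
    (hdet : c * K ≤ ⟪w, a⟫ * ⟪w', u⟫ - ⟪w', a⟫ * ⟪w, u⟫) :
    c * ‖w‖ ≤ ‖‖w'‖ • w - ‖w‖ • w'‖ := by
  set z := ‖w'‖ • w - ‖w‖ • w'
  have hza := abs_real_inner_le_norm z a
  have hzu := abs_real_inner_le_norm z u
  refine le_of_mul_le_mul_right ?_ hK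
  calc c * ‖w‖ * K = ‖w‖ * (c * K) := by ring
    _ ≤ ‖w‖ * (⟪w, a⟫ * ⟪w', u⟫ - ⟪w', a⟫ * ⟪w, u⟫) := by gcongr
    _ = ⟪w, u⟫ * ⟪z, a⟫ - ⟪w, a⟫ * ⟪z, u⟫ := by
      simp only [z, inner_sub_left, real_inner_smul_left]; ring
    _ ≤ |⟪w, u⟫| * |⟪z, a⟫| + |⟪w, a⟫| * |⟪z, u⟫| := by
      rw [← abs_mul, ← abs_mul]
      linarith [le_abs_self (⟪w, u⟫ * ⟪z, a⟫), neg_abs_le (⟪w, a⟫ * ⟪z, u⟫)]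
    _ ≤ |⟪w, u⟫| * (‖z‖ * ‖a‖) + |⟪w, a⟫| * (‖z‖ * ‖u‖) := by gcongr
    _ = ‖z‖ * (|⟪w, u⟫| * ‖a‖ + |⟪w, a⟫| * ‖u‖) := by ring
    _ ≤ ‖z‖ * K := by gcongr

theorem inner_le_of_le_det (hw : w ≠ 0) {c K M : ℝ} (hK : 0 < K) (hM : 0 < M) (hc : 0 ≤ c)
    (hK_ge : |⟪w, u⟫| * ‖a‖ + |⟪w, a⟫| * ‖u‖ ≤ K)
    (hdet : c * K ≤ ⟪w, a⟫ * ⟪w', u⟫ - ⟪w', a⟫ * ⟪w, u⟫) (hw' : ‖w'‖ ^ 2 ≤ M) :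
    ⟪w, w'⟫ ≤ (1 - c ^ 2 / (2 * M)) * (‖w‖ * ‖w'‖) := by
  have hz := mul_norm_le_norm_smul_sub_smul hK hK_ge hdet
  have hsq : (c * ‖w‖) ^ 2 ≤ 2 * ‖w‖ * ‖w'‖ * (‖w‖ * ‖w'‖ - ⟪w, w'⟫) := by
    rw [← norm_smul_sub_smul_sq]; gcongr
  have hgap : 0 ≤ ‖w‖ * ‖w'‖ - ⟪w, w'⟫ := sub_nonneg.mpr (real_inner_le_norm w w')
  have hw0 : 0 < ‖w‖ := norm_pos_iff.mpr hw
  have : c ^ 2 * (‖w‖ * ‖w'‖) ≤ 2 * M * (‖w‖ * ‖w'‖ - ⟪w, w'⟫) := by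
    have h1 : c ^ 2 * ‖w‖ ≤ 2 * ‖w'‖ * (‖w‖ * ‖w'‖ - ⟪w, w'⟫) := by nlinarith
    nlinarith [mul_le_mul_of_nonneg_right hw' hgap, norm_nonneg w']
  rw [sub_mul, one_mul, div_mul_eq_mul_div, le_sub_comm, div_le_iff₀ (by positivity)]
  linarith

end Geometry

/-- Assumption(ψ, φ) with `ψ ≤ 0.1` and `m φ ≤ ε_d / 4 < 0.025`. -/
structure NearlyOrthogonal_s8 [Fintype ι] (x : ι → E) (y : ι → ℝ) (φ : ℝ) : Prop where
  abs_label : ∀ i, |y i| = 1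
  norm_sq_ge : ∀ i, 0.9 ≤ ‖x i‖ ^ 2
  norm_sq_le : ∀ i, ‖x i‖ ^ 2 ≤ 1.1
  nonneg : 0 ≤ φ
  abs_inner_le : ∀ i j, i ≠ j → |⟪x i, x j⟫| ≤ φ
  card_mul_le : Fintype.card ι * φ ≤ 0.025

namespace NearlyOrthogonal_s8

variable [Fintype ι] {x : ι → E} {y : ι → ℝ} {φ : ℝ} {s : Finset ι} {c : ι → ℝ} {B : ℝ}

theorem label_mul_self (hS : NearlyOrthogonal_s8 x y φ) (i : ι) : y i * y i = 1 := by
  rw [← abs_mul_abs_self, hS.abs_label i, one_mul]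

theorem norm_le (hS : NearlyOrthogonal_s8 x y φ) (i : ι) : ‖x i‖ ≤ 1.049 := by
  nlinarith [hS.norm_sq_le i, norm_nonneg (x i)]

theorem abs_inner_sum_smul_le (hS : NearlyOrthogonal_s8 x y φ) (hB : 0 ≤ B)
    (hc : ∀ j ∈ s, |c j| ≤ B) {t : ι} (ht : t ∉ s) :
    |⟪∑ j ∈ s, c j • x j, x t⟫| ≤ 0.025 * B := by
  have hterm : ∀ j ∈ s, |⟪c j • x j, x t⟫| ≤ B * φ := fun j hj => by
    rw [real_inner_smul_left, abs_mul]
    exact mul_le_mul (hc j hj) (hS.abs_inner_le j t (ne_of_mem_of_not_mem hj ht))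
      (abs_nonneg _) hB
  have hcard : (#s : ℝ) ≤ Fintype.card ι := by exact_mod_cast s.card_le_univ
  calc |⟪∑ j ∈ s, c j • x j, x t⟫| ≤ ∑ j ∈ s, |⟪c j • x j, x t⟫| := by
        rw [sum_inner]; exact abs_sum_le_sum_abs _ _
    _ ≤ #s * (B * φ) := by simpa using sum_le_sum hterm
    _ ≤ Fintype.card ι * (B * φ) := by gcongr; exact mul_nonneg hB hS.nonneg
    _ ≤ 0.025 * B := by nlinarith [hS.card_mul_le]

theorem abs_inner_sum_smul_sub_le [DecidableEq ι] (hS : NearlyOrthogonal_s8 x y φ) (hB : 0 ≤ B)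
    (hc : ∀ j ∈ s, |c j| ≤ B) {i : ι} (hi : i ∈ s) :
    |⟪∑ j ∈ s, c j • x j, x i⟫ - c i * ‖x i‖ ^ 2| ≤ 0.025 * B := by
  rw [← sum_erase_add _ _ hi, inner_add_left, real_inner_smul_left, real_inner_self_eq_norm_sq,
    add_sub_cancel_right]
  exact hS.abs_inner_sum_smul_le hB (fun j hj => hc j (mem_of_mem_erase hj)) (notMem_erase i s)

theorem norm_sq_sum_smul_le [DecidableEq ι] (hS : NearlyOrthogonal_s8 x y φ) (hB : 0 ≤ B)
    (hc : ∀ j ∈ s, |c j| ≤ B) : ‖∑ j ∈ s, c j • x j‖ ^ 2 ≤ #s * (1.125 * B ^ 2) := by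
  set v := ∑ j ∈ s, c j • x j
  have hterm : ∀ j ∈ s, ⟪v, c j • x j⟫ ≤ 1.125 * B ^ 2 := fun j hj => by
    have hdiag := abs_le.mp (hS.abs_inner_sum_smul_sub_le hB hc hj)
    have hcj := abs_le.mp (hc j hj)
    rw [real_inner_smul_right]
    nlinarith [hS.norm_sq_le j, sq_abs (c j), abs_nonneg (c j), sq_nonneg (c j)]
  calc ‖v‖ ^ 2 = ∑ j ∈ s, ⟪v, c j • x j⟫ := by rw [← real_inner_self_eq_norm_sq, inner_sum]
    _ ≤ #s * (1.125 * B ^ 2) := by simpa using sum_le_sum hterm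

theorem norm_sum_label_smul_le [DecidableEq ι] (hS : NearlyOrthogonal_s8 x y φ) (hs : s.Nonempty) :
    ‖∑ j ∈ s, y j • x j‖ ≤ 1.0607 * #s := by
  have hsq := hS.norm_sq_sum_smul_le zero_le_one fun j (_ : j ∈ s) => (hS.abs_label j).le
  have hn : (1 : ℝ) ≤ #s := by exact_mod_cast hs.card_pos
  nlinarith [norm_nonneg (∑ j ∈ s, y j • x j)]

end NearlyOrthogonal_s8

theorem NearlyOrthogonal_s8.of_assumption {m : ℕ} {x : Fin m → E} {y : Fin m → ℝ} {εd ψ φ : ℝ}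
    (hm : 2 ≤ m) (hεd : εd < 0.1) (hψ : ψ ≤ 0.1) (hφ : φ ≤ εd / (4 * m))
    (hy : ∀ i, y i = 1 ∨ y i = -1) (hx : ∀ i, 1 - ψ ≤ ‖x i‖ ^ 2 ∧ ‖x i‖ ^ 2 ≤ 1 + ψ)
    (hxx : ∀ i j, i ≠ j → |⟪x i, x j⟫| ≤ φ) : NearlyOrthogonal_s8 x y φ where
  abs_label i := by rcases hy i with h | h <;> simp [h]
  norm_sq_ge i := by linarith [(hx i).1]
  norm_sq_le i := by linarith [(hx i).2]
  nonneg := (abs_nonneg _).trans (hxx ⟨0, by omega⟩ ⟨1, by omega⟩ (by simp))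
  abs_inner_le := hxx
  card_mul_le := by
    have hm0 : (0 : ℝ) < m := by norm_cast; omega
    rw [Fintype.card_fin]
    calc (m : ℝ) * φ ≤ m * (εd / (4 * m)) := by gcongr
      _ ≤ 0.025 := by field_simp; linarith

structure IsApproxKKT_s8 (x : ι → E) (y : ι → ℝ) (s : Finset ι) (ε δ : ℝ) (w : E)
    (lam : ι → ℝ) : Prop where
  lam_nonneg : ∀ i ∈ s, 0 ≤ lam i
  norm_sub_le : ‖w - ∑ i ∈ s, (lam i * y i) • x i‖ ≤ ε
  lam_mul_le : ∀ i ∈ s, lam i * (y i * ⟪w, x i⟫ - 1) ≤ δ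
  one_le_margin : ∀ i ∈ s, 1 ≤ y i * ⟪w, x i⟫

namespace IsApproxKKT_s8

variable {x : ι → E} {y : ι → ℝ} {φ : ℝ} {s : Finset ι} {ε δ : ℝ} {w : E} {lam : ι → ℝ}

theorem card_le_inner_sum_label (hw : IsApproxKKT_s8 x y s ε δ w lam) {t : Finset ι}
    (ht : t ⊆ s) : (#t : ℝ) ≤ ⟪w, ∑ j ∈ t, y j • x j⟫ := by
  simp only [inner_sum, real_inner_smul_right]
  simpa using sum_le_sum fun j hj => hw.one_le_margin j (ht hj)

variable [Fintype ι]

theorem abs_inner_sub_le (hS : NearlyOrthogonal_s8 x y φ) (hw : IsApproxKKT_s8 x y s ε δ w lam)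
    (i : ι) : |⟪w, x i⟫ - ⟪∑ j ∈ s, (lam j * y j) • x j, x i⟫| ≤ 1.049 * ε := by
  rw [← inner_sub_left, mul_comm]
  exact (abs_real_inner_le_norm _ _).trans
    (mul_le_mul hw.norm_sub_le (hS.norm_le i) (norm_nonneg _) ((norm_nonneg _).trans hw.norm_sub_le))

theorem abs_lam_mul_label_le (hS : NearlyOrthogonal_s8 x y φ) (hw : IsApproxKKT_s8 x y s ε δ w lam)
    {B : ℝ} (hB : ∀ j ∈ s, lam j ≤ B) : ∀ j ∈ s, |lam j * y j| ≤ B := fun j hj => by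
  rw [abs_mul, hS.abs_label, mul_one, abs_of_nonneg (hw.lam_nonneg j hj)]
  exact hB j hj

variable [DecidableEq ι]

theorem abs_margin_sub_le (hS : NearlyOrthogonal_s8 x y φ) (hw : IsApproxKKT_s8 x y s ε δ w lam)
    {B : ℝ} (hB : ∀ j ∈ s, lam j ≤ B) {i : ι} (hi : i ∈ s) :
    |y i * ⟪w, x i⟫ - lam i * ‖x i‖ ^ 2| ≤ 0.025 * B + 1.049 * ε := by
  have hdiag := hS.abs_inner_sum_smul_sub_le ((hw.lam_nonneg i hi).trans (hB i hi))
    (hw.abs_lam_mul_label_le hS hB) hi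
  set v := ∑ j ∈ s, (lam j * y j) • x j
  have hsplit : y i * ⟪w, x i⟫ - lam i * ‖x i‖ ^ 2
      = y i * (⟪w, x i⟫ - ⟪v, x i⟫) + y i * (⟪v, x i⟫ - lam i * y i * ‖x i‖ ^ 2) := by
    linear_combination (lam i * ‖x i‖ ^ 2) * hS.label_mul_self i
  rw [hsplit]
  refine (abs_add_le _ _).trans ?_
  rw [abs_mul, abs_mul, hS.abs_label, one_mul, one_mul]
  linarith [hw.abs_inner_sub_le hS i]

theorem lam_le_s8 (hS : NearlyOrthogonal_s8 x y φ) (hw : IsApproxKKT_s8 x y s ε δ w lam)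
    (hε : ε ≤ 0.5) (hδ : δ ≤ 0.5) {i : ι} (hi : i ∈ s) : lam i ≤ 2.03 := by
  -- At the largest multiplier `λ_k` the margin is at least `0.875 λ_k - 0.53`, so
  -- `λ_k (margin - 1) ≤ δ ≤ 0.5` keeps `λ_k` small.
  obtain ⟨k, hk, hmax⟩ := s.exists_max_image lam ⟨i, hi⟩
  refine (hmax i hi).trans ?_
  have hest := (abs_le.mp (hw.abs_margin_sub_le hS hmax hk)).1
  have hlam := hw.lam_nonneg k hk
  have hmargin : 0.875 * lam k - 0.5245 ≤ y k * ⟪w, x k⟫ := by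
    nlinarith [hS.norm_sq_ge k]
  nlinarith [hw.lam_mul_le k hk]

theorem margin_le (hS : NearlyOrthogonal_s8 x y φ) (hw : IsApproxKKT_s8 x y s ε δ w lam)
    (hε : ε ≤ 0.5) (hδ : δ ≤ 0.5) {i : ι} (hi : i ∈ s) :
    y i * ⟪w, x i⟫ ≤ 1.43 + 1.16 * ε := by
  have hest := (abs_le.mp (hw.abs_margin_sub_le hS (fun j hj => hw.lam_le_s8 hS hε hδ hj) hi)).2
  have hε0 : 0 ≤ ε := (norm_nonneg _).trans hw.norm_sub_le
  have hlam := hw.lam_nonneg i hi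
  have hM := hw.one_le_margin i hi
  have hupper : y i * ⟪w, x i⟫ - 0.051 - 1.049 * ε ≤ 1.1 * lam i := by
    nlinarith [hS.norm_sq_le i]
  by_contra! hcon
  nlinarith [mul_le_mul_of_nonneg_right hupper (sub_nonneg.mpr hM), hw.lam_mul_le i hi,
    mul_nonneg (sub_nonneg.mpr hcon.le) hε0, sq_nonneg (y i * ⟪w, x i⟫ - 1.43 - 1.16 * ε),
    sq_nonneg ε]

theorem margin_le_of_notMem (hS : NearlyOrthogonal_s8 x y φ) (hw : IsApproxKKT_s8 x y s ε δ w lam)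
    (hε : ε ≤ 0.5) (hδ : δ ≤ 0.5) {t : ι} (ht : t ∉ s) :
    y t * ⟪w, x t⟫ ≤ 0.051 + 1.049 * ε := by
  have hc := hw.abs_lam_mul_label_le hS fun j hj => hw.lam_le_s8 hS hε hδ hj
  have hcross := hS.abs_inner_sum_smul_le (by norm_num) hc ht
  have hnear := hw.abs_inner_sub_le hS t
  calc y t * ⟪w, x t⟫ ≤ |⟪w, x t⟫| := by
        rw [← one_mul |_|, ← hS.abs_label t, ← abs_mul]; exact le_abs_self _
    _ ≤ 0.051 + 1.049 * ε := by
        linarith [abs_sub_abs_le_abs_sub ⟪w, x t⟫ ⟪∑ j ∈ s, (lam j * y j) • x j, x t⟫]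

theorem norm_sq_le (hS : NearlyOrthogonal_s8 x y φ) (hw : IsApproxKKT_s8 x y s ε δ w lam)
    (hε : ε ≤ 0.5) (hδ : δ ≤ 0.5) (hs : s.Nonempty) : ‖w‖ ^ 2 ≤ 8 * #s := by
  have hc := hw.abs_lam_mul_label_le hS fun j hj => hw.lam_le_s8 hS hε hδ hj
  have hv := hS.norm_sq_sum_smul_le (by norm_num) hc
  have hn : (1 : ℝ) ≤ #s := by exact_mod_cast hs.card_pos
  have hnorm : ‖w‖ ≤ ‖∑ j ∈ s, (lam j * y j) • x j‖ + 0.5 := by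
    linarith [norm_le_norm_sub_add w (∑ j ∈ s, (lam j * y j) • x j), hw.norm_sub_le]
  have hw2 := pow_le_pow_left₀ (norm_nonneg w) hnorm 2
  nlinarith [sq_nonneg (‖∑ j ∈ s, (lam j * y j) • x j‖ - 1)]

theorem inner_sum_label_le (hS : NearlyOrthogonal_s8 x y φ) (hw : IsApproxKKT_s8 x y s ε δ w lam)
    (hε : ε ≤ 0.5) (hδ : δ ≤ 0.5) {t : Finset ι} (ht : t ⊆ s) :
    ⟪w, ∑ j ∈ t, y j • x j⟫ ≤ #t * (1.43 + 1.16 * ε) := by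
  simp only [inner_sum, real_inner_smul_right]
  calc ∑ j ∈ t, y j * ⟪w, x j⟫ ≤ ∑ _j ∈ t, (1.43 + 1.16 * ε) :=
        sum_le_sum fun j hj => hw.margin_le hS hε hδ (ht hj)
    _ = #t * (1.43 + 1.16 * ε) := by rw [sum_const, nsmul_eq_mul]

end IsApproxKKT_s8

theorem le_mul_sub_mul_of_bounds {A A' U U' n ε ε' : ℝ} (hε : 0 ≤ ε) (hε' : 0 ≤ ε')
    (hεε' : ε + ε' ≤ 0.5) (hA : 1 ≤ A) (hA' : A' ≤ 0.051 + 1.049 * ε') (hU : n ≤ U)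
    (hU_le : U ≤ n * (1.43 + 1.16 * ε)) (hU' : n ≤ U') :
    0.04 * (4.241 * n) ≤ A * U' - A' * U := by
  have hn : 0 ≤ n := by nlinarith
  have hAU' : n ≤ A * U' := by nlinarith
  have hρμ : (0.051 + 1.049 * ε') * (1.43 + 1.16 * ε) ≤ 0.83 := by
    nlinarith [mul_nonneg hε (show 0 ≤ 0.5 - ε - ε' by linarith)]
  have hρ : 0 ≤ 0.051 + 1.049 * ε' := by linarith
  nlinarith [mul_le_mul_of_nonneg_right hA' (hn.trans hU), mul_le_mul_of_nonneg_left hU_le hρ]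

theorem inner_le_of_isApproxKKT_erase [Fintype ι] [DecidableEq ι] [Nontrivial ι]
    {x : ι → E} {y : ι → ℝ} {φ ε δ ε' δ' : ℝ} {w w' : E} {lam lam' : ι → ℝ} {l : ι}
    (hS : NearlyOrthogonal_s8 x y φ) (hw : IsApproxKKT_s8 x y univ ε δ w lam)
    (hw' : IsApproxKKT_s8 x y (univ.erase l) ε' δ' w' lam') (hεε' : ε + ε' ≤ 0.5)
    (hδ : δ ≤ 0.5) (hδ' : δ' ≤ 0.5) :
    ⟪w, w'⟫ ≤ (1 - 1 / (10000 * Fintype.card ι)) * (‖w‖ * ‖w'‖) := by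
  have hε0 : 0 ≤ ε := (norm_nonneg _).trans hw.norm_sub_le
  have hε'0 : 0 ≤ ε' := (norm_nonneg _).trans hw'.norm_sub_le
  have hε : ε ≤ 0.5 := by linarith
  have hε' : ε' ≤ 0.5 := by linarith
  set s := univ.erase l
  have hs : s.Nonempty := univ_nontrivial.erase_nonempty
  have hn : (1 : ℝ) ≤ #s := by exact_mod_cast hs.card_pos
  have hn_le : (#s : ℝ) ≤ Fintype.card ι := by exact_mod_cast s.card_le_univ
  set n : ℝ := (#s : ℝ)
  set a := y l • x l
  set u := ∑ j ∈ s, y j • x j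
  have hA : ⟪w, a⟫ = y l * ⟪w, x l⟫ := real_inner_smul_right _ _ _
  have hA' : ⟪w', a⟫ = y l * ⟪w', x l⟫ := real_inner_smul_right _ _ _
  have hA_ge : 1 ≤ ⟪w, a⟫ := hA ▸ hw.one_le_margin l (mem_univ l)
  have hA_le : ⟪w, a⟫ ≤ 1.43 + 1.16 * ε := hA ▸ hw.margin_le hS hε hδ (mem_univ l)
  have hA'_le : ⟪w', a⟫ ≤ 0.051 + 1.049 * ε' :=
    hA' ▸ hw'.margin_le_of_notMem hS hε' hδ' (notMem_erase l univ)
  have hU_ge : n ≤ ⟪w, u⟫ := hw.card_le_inner_sum_label (subset_univ s)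
  have hU_le : ⟪w, u⟫ ≤ n * (1.43 + 1.16 * ε) := hw.inner_sum_label_le hS hε hδ (subset_univ s)
  have hU'_ge : n ≤ ⟪w', u⟫ := hw'.card_le_inner_sum_label subset_rfl
  have ha : ‖a‖ ≤ 1.049 := by
    rw [norm_smul, Real.norm_eq_abs, hS.abs_label, one_mul]; exact hS.norm_le l
  have hu : ‖u‖ ≤ 1.0607 * n := hS.norm_sum_label_smul_le hs
  have hw0 : w ≠ 0 := by
    rintro rfl
    rw [inner_zero_left] at hA_ge
    norm_num at hA_ge
  have hK : |⟪w, u⟫| * ‖a‖ + |⟪w, a⟫| * ‖u‖ ≤ 4.241 * n := by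
    rw [abs_of_nonneg (by linarith), abs_of_nonneg (by linarith)]
    nlinarith [mul_le_mul hU_le ha (norm_nonneg a) (by positivity),
      mul_le_mul hA_le hu (norm_nonneg u) (by positivity)]
  have hdet : 0.04 * (4.241 * n) ≤ ⟪w, a⟫ * ⟪w', u⟫ - ⟪w', a⟫ * ⟪w, u⟫ :=
    le_mul_sub_mul_of_bounds hε0 hε'0 hεε' hA_ge hA'_le hU_ge hU_le hU'_ge
  have hw' := (hw'.norm_sq_le hS hε' hδ' hs).trans (by linarith : 8 * n ≤ 8 * Fintype.card ι)
  convert inner_le_of_le_det hw0 (by positivity) (by positivity) (by norm_num) hK hdet hw' using 3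
  field_simp
  norm_num

/-- The identity map is not a successful unlearning algorithm for linear
predictors: there is a universal constant `C > 0` such that the original predictor `w` has
cosine similarity at most `1 - C/m + C(εd + ε₁ + ε̃)` with any approximate KKT point of the
margin-maximization problem w.r.t. the retained dataset `S \ {(x_l, y_l)}`. -/
theorem stmt_8 :
    ∃ C : ℝ, 0 < C ∧
      ∀ (d m : ℕ), 2 ≤ m →
      ∀ (ε₁ δ₁ εd ψ φ : ℝ),
        0 < ε₁ → ε₁ ≤ 0.5 → 0 < δ₁ → δ₁ ≤ 0.5 → 0 < εd → εd < 0.1 →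
        ψ ≤ 0.1 → φ ≤ εd / (4 * m) →
      ∀ (x : Fin m → EuclideanSpace ℝ (Fin d)) (y : Fin m → ℝ),
        (∀ i, y i = 1 ∨ y i = -1) →
        (∀ i, 1 - ψ ≤ ‖x i‖ ^ 2 ∧ ‖x i‖ ^ 2 ≤ 1 + ψ) →
        (∀ i j, i ≠ j → |(inner ℝ (x i) (x j) : ℝ)| ≤ φ) →
      ∀ (w : EuclideanSpace ℝ (Fin d)) (lam : Fin m → ℝ),
        (∀ i, 0 ≤ lam i) →
        ‖w - ∑ i, (lam i * y i) • x i‖ ≤ ε₁ →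
        (∀ i, lam i * (y i * (inner ℝ w (x i) : ℝ) - 1) ≤ δ₁) →
        (∀ i, 1 ≤ y i * (inner ℝ w (x i) : ℝ)) →
      ∀ l : Fin m,
      ∀ (ε' δ' : ℝ), 0 < ε' → ε' ≤ 0.5 → 0 < δ' → δ' ≤ 0.5 →
      ∀ (w' : EuclideanSpace ℝ (Fin d)) (lam' : Fin m → ℝ),
        (∀ i, i ≠ l → 0 ≤ lam' i) →
        ‖w' - ∑ i ∈ Finset.univ.erase l, (lam' i * y i) • x i‖ ≤ ε' →
        (∀ i, i ≠ l → lam' i * (y i * (inner ℝ w' (x i) : ℝ) - 1) ≤ δ') →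
        (∀ i, i ≠ l → 1 ≤ y i * (inner ℝ w' (x i) : ℝ)) →
        (inner ℝ w w' : ℝ) ≤
          (1 - C / m + C * (εd + ε₁ + ε')) * (‖w‖ * ‖w'‖) := by
  refine ⟨1 / 10000, by norm_num, ?_⟩
  intro d m hm ε₁ δ₁ εd ψ φ hε₁ _ _ hδ₁ hεd hεd' hψ hφ x y hy hx hxx w lam hlam hw hslack hmargin
    l ε' δ' hε' _ _ hδ' w' lam' hlam' hw' hslack' hmargin'
  rw [div_eq_mul_one_div (1 / 10000 : ℝ)]
  have hcs := real_inner_le_norm w w'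
  have hnorms : 0 ≤ ‖w‖ * ‖w'‖ := by positivity
  rcases le_or_gt (1 / (m : ℝ)) (εd + ε₁ + ε') with herr | herr
  · nlinarith [mul_nonneg (sub_nonneg.mpr herr) hnorms]
  have : Nontrivial (Fin m) := Fin.nontrivial_iff_two_le.mpr hm
  have hS := NearlyOrthogonal_s8.of_assumption hm hεd' hψ hφ hy hx hxx
  have hKKT : IsApproxKKT_s8 x y univ ε₁ δ₁ w lam :=
    ⟨fun i _ => hlam i, hw, fun i _ => hslack i, fun i _ => hmargin i⟩
  have hKKT' : IsApproxKKT_s8 x y (univ.erase l) ε' δ' w' lam' :=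
    ⟨fun i hi => hlam' i (ne_of_mem_erase hi), hw', fun i hi => hslack' i (ne_of_mem_erase hi),
      fun i hi => hmargin' i (ne_of_mem_erase hi)⟩
  have hm_inv : 1 / (m : ℝ) ≤ 1 / 2 := by gcongr; exact_mod_cast hm
  have key := inner_le_of_isApproxKKT_erase hS hKKT hKKT' (by linarith) hδ₁ hδ'
  rw [Fintype.card_fin, ← one_div_mul_one_div] at key
  nlinarith [mul_nonneg (by positivity : 0 ≤ εd + ε₁ + ε') hnorms]
end

section
/- Let V be a real inner-product space (e.g., ℝ^N), let S = {(x_1,y_1),…,(x_m,y_m)} ⊆ ℝ^d × {−1,1}, and let N : V × ℝ^d → ℝ together with a map g : V × ℝ^d → V satisfy, for every scalar C > 0, every θ ∈ V and every x ∈ ℝ^d: N(C·θ, x) = C·N(θ, x) and g(C·θ, x) = g(θ, x) (1-homogeneity of N in the parameters with 0-homogeneous gradient g). Suppose θ ∈ V and λ_1,…,λ_m ∈ ℝ satisfy: λ_i ≥ 0 for all i; ‖θ − Σ_{i=1}^m λ_i y_i g(θ, x_i)‖ ≤ ε; λ_i (y_i N(θ, x_i) − 1) ≤ δ for all i; and y_i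 N(θ, x_i) ≥ 1 − γ for all i, where 0 ≤ γ < 1. Then the rescaled point θ/(1 − γ) with multipliers λ_i/(1 − γ) satisfies: λ_i/(1 − γ) ≥ 0; ‖θ/(1−γ) − Σ_{i=1}^m (λ_i/(1−γ)) y_i g(θ/(1−γ), x_i)‖ ≤ ε/(1 − γ); (λ_i/(1−γ))·(y_i N(θ/(1−γ), x_i) − 1) ≤ (γ·max_{p∈[m]} λ_p + δ)/(1 − γ)² for all i; and y_i N(θ/(1−γ), x_i) ≥ 1 for all i. -/
/-- Rescaling an `(ε, δ, γ)`-approximate KKT point of the margin-maximization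
problem for a 1-homogeneous model `N` (with 0-homogeneous gradient map `g`) by `1/(1 - γ)`
yields a point which is primal feasible, with stationarity error `ε/(1 - γ)` and complementary
slackness error `(γ · max_p λ_p + δ)/(1 - γ)²`, for the multipliers `λ_i/(1 - γ)`. -/
theorem stmt_10
    (V : Type*) [NormedAddCommGroup V] [InnerProductSpace ℝ V]
    (d m : ℕ) (hm : 0 < m)
    (x : Fin m → EuclideanSpace ℝ (Fin d)) (y : Fin m → ℝ)
    (hy : ∀ i, y i = 1 ∨ y i = -1)
    (N : V → EuclideanSpace ℝ (Fin d) → ℝ)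
    (g : V → EuclideanSpace ℝ (Fin d) → V)
    (hN : ∀ C : ℝ, 0 < C → ∀ (θ : V) (x' : EuclideanSpace ℝ (Fin d)),
      N (C • θ) x' = C * N θ x')
    (hg : ∀ C : ℝ, 0 < C → ∀ (θ : V) (x' : EuclideanSpace ℝ (Fin d)),
      g (C • θ) x' = g θ x')
    (θ : V) (lam : Fin m → ℝ) (ε δ γ : ℝ)
    (hγ0 : 0 ≤ γ) (hγ1 : γ < 1)
    (hlam : ∀ i, 0 ≤ lam i)
    (hstat : ‖θ - ∑ i, (lam i * y i) • g θ (x i)‖ ≤ ε)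
    (hcs : ∀ i, lam i * (y i * N θ (x i) - 1) ≤ δ)
    (hpf : ∀ i, 1 - γ ≤ y i * N θ (x i)) :
    (∀ i, 0 ≤ lam i / (1 - γ)) ∧
    ‖(1 / (1 - γ)) • θ -
        ∑ i, ((lam i / (1 - γ)) * y i) • g ((1 / (1 - γ)) • θ) (x i)‖ ≤ ε / (1 - γ) ∧
    (∀ i, (lam i / (1 - γ)) * (y i * N ((1 / (1 - γ)) • θ) (x i) - 1) ≤
      (γ * (Finset.univ.sup' (Finset.univ_nonempty_iff.mpr (Fin.pos_iff_nonempty.mp hm)) lam)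
          + δ) / (1 - γ) ^ 2) ∧
    (∀ i, 1 ≤ y i * N ((1 / (1 - γ)) • θ) (x i)) := by
  have h1γ : (0:ℝ) < 1 - γ := by linarith
  have hc : (0:ℝ) < 1 / (1 - γ) := by positivity
  have hNc : ∀ x', N ((1 / (1 - γ)) • θ) x' = (1 / (1 - γ)) * N θ x' := fun x' => hN _ hc θ x'
  have hgc : ∀ x', g ((1 / (1 - γ)) • θ) x' = g θ x' := fun x' => hg _ hc θ x'
  refine ⟨fun i => div_nonneg (hlam i) h1γ.le, ?_, ?_, ?_⟩
  · have : (1 / (1 - γ)) • θ - ∑ i, ((lam i / (1 - γ)) * y i) • g ((1 / (1 - γ)) • θ) (x i)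
        = (1 / (1 - γ)) • (θ - ∑ i, (lam i * y i) • g θ (x i)) := by
      rw [smul_sub, Finset.smul_sum]
      congr 1
      refine Finset.sum_congr rfl fun i _ => ?_
      rw [hgc, smul_smul]
      ring_nf
    rw [this, norm_smul, Real.norm_eq_abs, abs_of_pos hc]
    rw [div_eq_mul_inv ε, mul_comm ε, one_div]
    exact mul_le_mul_of_nonneg_left hstat (by positivity)
  · intro i
    rw [hNc]
    have hmax : lam i ≤ Finset.univ.sup'
        (Finset.univ_nonempty_iff.mpr (Fin.pos_iff_nonempty.mp hm)) lam :=
      Finset.le_sup' lam (Finset.mem_univ i)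
    have key : lam i / (1 - γ) * (y i * (1 / (1 - γ) * N θ (x i)) - 1)
        = (lam i * (y i * N θ (x i) - 1) + γ * lam i) / (1 - γ) ^ 2 := by
      field_simp
      ring
    rw [key]
    apply div_le_div_of_nonneg_right _ (by positivity)
    have := hcs i
    nlinarith [mul_le_mul_of_nonneg_left hmax hγ0]
  · intro i
    rw [hNc]
    have := hpf i
    rw [mul_comm (1 / (1 - γ)), ← mul_assoc, mul_one_div, le_div_iff₀ h1γ, one_mul]
    exact this
end

section
/- Let d, m ∈ ℕ, let 0 < ε_d ≤ 0.5, 0 < ε ≤ 0.5 and 0 < δ ≤ 0.5. Let S = {(x_1,y_1),…,(x_m,y_m)} ⊆ ℝ^d × {−1,1} satisfy Assumption(ψ, φ) with ψ ≤ 0.1 and φ ≤ ε_d/(4m). If w ∈ ℝ^d is an (ε, δ)-approximate KKT point of the margin-maximization problem w.r.t. S with multipliers λ_1,…,λ_m, then max_{i∈[m]} λ_i ≤ 2.4. -/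
/-!
Let `Λ = λ_{i₀}` be the largest multiplier. Stationarity says `w` is within `ε` of
`∑ λ_j y_j x_j`, so pairing with `x_{i₀}` gives
`y_{i₀} ⟨w, x_{i₀}⟩ ≥ Λ ‖x_{i₀}‖² - ε ‖x_{i₀}‖ - Λ (m - 1) φ ≥ 0.9 Λ - 0.525 - Λ / 8`,
the cross terms being small by near-orthogonality. Feeding this into complementary slackness
`Λ (y_{i₀} ⟨w, x_{i₀}⟩ - 1) ≤ δ ≤ 1/2` yields `0.775 Λ² ≤ 1.525 Λ + 0.5`, hence `Λ ≤ 2.4`.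
-/

open Finset RealInnerProductSpace

section Margin

variable {E ι : Type*} [NormedAddCommGroup E] [InnerProductSpace ℝ E] [Fintype ι] [DecidableEq ι]
  {x : ι → E} {y lam : ι → ℝ}

lemma margin_eq_self_add_cross (w : E) {i : ι} (hyi : y i = 1 ∨ y i = -1) :
    y i * ⟪w, x i⟫ = y i * ⟪w - ∑ j, (lam j * y j) • x j, x i⟫ + lam i * ‖x i‖ ^ 2
      + y i * ∑ j ∈ univ.erase i, lam j * y j * ⟪x j, x i⟫ := by
  have hsum : ⟪∑ j, (lam j * y j) • x j, x i⟫
      = ∑ j ∈ univ.erase i, lam j * y j * ⟪x j, x i⟫ + lam i * y i * ‖x i‖ ^ 2 := by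
    simp only [sum_inner, real_inner_smul_left]
    rw [← sum_erase_add _ _ (mem_univ i), real_inner_self_eq_norm_sq]
  rw [inner_sub_left, hsum]
  rcases hyi with h | h <;> rw [h] <;> ring

lemma abs_cross_sum_le (hy : ∀ j, y j = 1 ∨ y j = -1) (hlam : ∀ j, 0 ≤ lam j) {i : ι}
    (hmax : ∀ j, lam j ≤ lam i) {φ : ℝ} (hortho : ∀ j, j ≠ i → |⟪x j, x i⟫| ≤ φ) :
    |∑ j ∈ univ.erase i, lam j * y j * ⟪x j, x i⟫| ≤ #(univ.erase i) * (lam i * φ) := by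
  refine (abs_sum_le_sum_abs _ _).trans ?_
  rw [← nsmul_eq_mul]
  refine sum_le_card_nsmul _ _ _ fun j hj => ?_
  have hyj : |y j| = 1 := by rcases hy j with h | h <;> simp [h]
  rw [abs_mul, abs_mul, hyj, mul_one, abs_of_nonneg (hlam j)]
  exact mul_le_mul (hmax j) (hortho j (ne_of_mem_erase hj)) (abs_nonneg _) (hlam i)

lemma margin_ge_of_max_multiplier (hy : ∀ j, y j = 1 ∨ y j = -1) (hlam : ∀ j, 0 ≤ lam j) {i : ι}
    (hmax : ∀ j, lam j ≤ lam i) {φ : ℝ} (hortho : ∀ j, j ≠ i → |⟪x j, x i⟫| ≤ φ) (w : E) :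
    lam i * ‖x i‖ ^ 2 - ‖w - ∑ j, (lam j * y j) • x j‖ * ‖x i‖ - lam i * (#(univ.erase i) * φ)
      ≤ y i * ⟪w, x i⟫ := by
  have hyi : |y i| = 1 := by rcases hy i with h | h <;> simp [h]
  have hstat := abs_real_inner_le_norm (w - ∑ j, (lam j * y j) • x j) (x i)
  have hcross := abs_cross_sum_le hy hlam hmax hortho
  rw [margin_eq_self_add_cross w (hy i)]
  have h1 := neg_abs_le (y i * ⟪w - ∑ j, (lam j * y j) • x j, x i⟫)
  have h2 := neg_abs_le (y i * ∑ j ∈ univ.erase i, lam j * y j * ⟪x j, x i⟫)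
  rw [abs_mul, hyi, one_mul] at h1 h2
  linarith

end Margin

lemma card_erase_mul_le {m : ℕ} (i : Fin m) {φ εd : ℝ} (hεd : 0 < εd) (hφ : φ ≤ εd / (4 * m)) :
    #(univ.erase i) * φ ≤ εd / 4 := by
  have hm : (0 : ℝ) < m := by exact_mod_cast i.pos
  have hcard : (#(univ.erase i) : ℝ) ≤ m := by
    exact_mod_cast (card_erase_le.trans (card_univ.trans (Fintype.card_fin m)).le)
  rcases le_or_gt 0 φ with hφ0 | hφ0
  · calc #(univ.erase i) * φ ≤ m * (εd / (4 * m)) := by gcongr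
      _ = εd / 4 := by field_simp
  · nlinarith [(#(univ.erase i)).cast_nonneg (α := ℝ)]

theorem stmt_11_general
    (d m : ℕ)
    (ε δ εd ψ φ : ℝ)
    (hεdpos : 0 < εd) (hεdle : εd ≤ 0.5)
    (hεle : ε ≤ 0.5)
    (hδle : δ ≤ 0.5)
    (hψ : ψ ≤ 0.1) (hφ : φ ≤ εd / (4 * m))
    (x : Fin m → EuclideanSpace ℝ (Fin d)) (y : Fin m → ℝ)
    (hy : ∀ i, y i = 1 ∨ y i = -1)
    (hnorm : ∀ i, 1 - ψ ≤ ‖x i‖ ^ 2 ∧ ‖x i‖ ^ 2 ≤ 1 + ψ)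
    (hortho : ∀ i j, i ≠ j → |(inner ℝ (x i) (x j) : ℝ)| ≤ φ)
    (w : EuclideanSpace ℝ (Fin d)) (lam : Fin m → ℝ)
    (hlam : ∀ i, 0 ≤ lam i)
    (hstat : ‖w - ∑ i, (lam i * y i) • x i‖ ≤ ε)
    (hcs : ∀ i, lam i * (y i * (inner ℝ w (x i) : ℝ) - 1) ≤ δ) :
    ∀ i, lam i ≤ 2.4 := by
  intro i
  obtain ⟨i₀, -, hmax⟩ := exists_max_image univ lam ⟨i, mem_univ i⟩
  have hmax' : ∀ j, lam j ≤ lam i₀ := fun j => hmax j (mem_univ j)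
  suffices hΛ : lam i₀ ≤ 2.4 by exact (hmax' i).trans hΛ
  have hΛ0 := hlam i₀
  have hsq_lb : 0.9 ≤ ‖x i₀‖ ^ 2 := by linarith [(hnorm i₀).1]
  have hnorm_ub : ‖x i₀‖ ≤ 1.05 := by nlinarith [(hnorm i₀).2, norm_nonneg (x i₀)]
  have hcard := card_erase_mul_le i₀ hεdpos hφ
  have hmargin := margin_ge_of_max_multiplier hy hlam hmax' (fun j hj => hortho j i₀ hj) w
  have hself : 0.9 * lam i₀ ≤ lam i₀ * ‖x i₀‖ ^ 2 := by nlinarith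
  have hresidual : ‖w - ∑ j, (lam j * y j) • x j‖ * ‖x i₀‖ ≤ 0.5 * 1.05 :=
    mul_le_mul (hstat.trans hεle) hnorm_ub (norm_nonneg _) (by norm_num)
  have hcross : lam i₀ * (#(univ.erase i₀) * φ) ≤ lam i₀ / 8 := by nlinarith
  have hmargin' : 0.9 * lam i₀ - 0.525 - lam i₀ / 8 ≤ y i₀ * ⟪w, x i₀⟫ := by linarith
  have hquad : 0.775 * lam i₀ ^ 2 ≤ 1.525 * lam i₀ + 0.5 := by
    nlinarith [hcs i₀, mul_le_mul_of_nonneg_left hmargin' hΛ0]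
  nlinarith [sq_nonneg (lam i₀ - 2.4)]

/-- For a linear predictor that is an `(ε, δ)`-approximate KKT point of the
margin-maximization problem on a nearly-orthogonal dataset, every KKT multiplier is at most
`2.4`. -/
theorem stmt_11
    (d m : ℕ)
    (ε δ εd ψ φ : ℝ)
    (hεdpos : 0 < εd) (hεdle : εd ≤ 0.5)
    (hεpos : 0 < ε) (hεle : ε ≤ 0.5)
    (hδpos : 0 < δ) (hδle : δ ≤ 0.5)
    (hψ : ψ ≤ 0.1) (hφ : φ ≤ εd / (4 * m))
    (x : Fin m → EuclideanSpace ℝ (Fin d)) (y : Fin m → ℝ)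
    (hy : ∀ i, y i = 1 ∨ y i = -1)
    (hnorm : ∀ i, 1 - ψ ≤ ‖x i‖ ^ 2 ∧ ‖x i‖ ^ 2 ≤ 1 + ψ)
    (hortho : ∀ i j, i ≠ j → |(inner ℝ (x i) (x j) : ℝ)| ≤ φ)
    (w : EuclideanSpace ℝ (Fin d)) (lam : Fin m → ℝ)
    (hlam : ∀ i, 0 ≤ lam i)
    (hstat : ‖w - ∑ i, (lam i * y i) • x i‖ ≤ ε)
    (hcs : ∀ i, lam i * (y i * (inner ℝ w (x i) : ℝ) - 1) ≤ δ)
    (hpf : ∀ i, 1 ≤ y i * (inner ℝ w (x i) : ℝ)) :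
    ∀ i, lam i ≤ 2.4 :=
  stmt_11_general d m ε δ εd ψ φ hεdpos hεdle hεle hδle hψ hφ x y hy hnorm hortho w lam hlam hstat
    hcs
end

section
/- Let n, d, m ∈ ℕ, let 0 < ε_d ≤ 1, 0 < ε ≤ 1, 0 < δ ≤ 1, and fix u_1,…,u_n ∈ {−1/√n, 1/√n}. Let S satisfy Assumption(ψ, φ) with ψ ≤ 0.1 and φ ≤ ε_d/(4mn), and suppose θ = (w_1,…,w_n) is an (ε, δ)-approximate KKT point of the margin-maximization problem w.r.t. S with multipliers λ_1,…,λ_m. Write J₊ = {j ∈ [n] : u_j > 0} and J₋ = {j ∈ [n] : u_j < 0}. Then for every i ∈ [m]: max{ Σ_{j∈J₊} u_j² λ_i σ'_{i,j}(θ), Σ_{j∈J₋} u_j² λ_i σ'_{i,j}(θ) } ≤ 2.5 + 5.25·ε + 2.4·δ ≤ 10.2; consequently Σ_{j=1}^n u_j² λ_i σ'_{i,j}(θ) ≤ 5 + 10.5·ε + 4.8·δ ≤ 20.4 and λ_i ≤ n·(5 + 10.5·ε + 4.8·δ) ≤ 20.4·n. -/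
/-!
Expanding each `⟪w_j, x_i⟫` through the stationarity condition shows that the margin
`y_i N(θ, x_i)` equals `T_i ‖x_i‖²`, where `T_i = λ_i ∑_j u_j² σ'_{i,j}` is the active mass of
sample `i`, up to a cross term of size at most `φ ∑_k λ_k` (near-orthogonality) and a residual
term of size at most `‖x_i‖ ε` (Cauchy–Schwarz). Complementary slackness caps
`λ_i y_i N(θ, x_i)` by `λ_i + δ`, so once `λ_i > 2.5` the active mass is at most about
`1 + φ ∑_k λ_k`. At the largest multiplier `λ_{i₀}` we also have `λ_{i₀} ≤ n T_{i₀}` (the positive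
margin forces some neuron to be active) and `4 m n φ ≤ 1`, so `φ ∑_k λ_k ≤ T_{i₀} / 4`; this
bounds the cross term itself, and then every `T_i`.
-/

/-- ReLU activation-pattern indicator: `σ'(w, x) = 1` if `⟨w, x⟩ ≥ 0` and `0` otherwise. -/
noncomputable def act {d : ℕ} (w x : EuclideanSpace ℝ (Fin d)) : ℝ :=
  if 0 ≤ (inner ℝ w x : ℝ) then 1 else 0

/-- Two-layer ReLU network with fixed second layer `u` and first-layer weights `θ`. -/
noncomputable def net {n d : ℕ} (u : Fin n → ℝ)
    (θ : Fin n → EuclideanSpace ℝ (Fin d)) (x : EuclideanSpace ℝ (Fin d)) : ℝ :=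
  ∑ j, u j * max ((inner ℝ (θ j) x : ℝ)) 0

open Finset RealInnerProductSpace

lemma act_eq_zero_or_one {d : ℕ} (w x : EuclideanSpace ℝ (Fin d)) :
    act w x = 0 ∨ act w x = 1 := by
  unfold act; split_ifs <;> simp

lemma act_nonneg {d : ℕ} (w x : EuclideanSpace ℝ (Fin d)) : 0 ≤ act w x := by
  rcases act_eq_zero_or_one w x with h | h <;> simp [h]

lemma act_le_one {d : ℕ} (w x : EuclideanSpace ℝ (Fin d)) : act w x ≤ 1 := by
  rcases act_eq_zero_or_one w x with h | h <;> simp [h]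

lemma act_mul_inner {d : ℕ} (w x : EuclideanSpace ℝ (Fin d)) :
    act w x * ⟪w, x⟫ = max ⟪w, x⟫ 0 := by
  unfold act
  split_ifs with h
  · rw [one_mul, max_eq_left h]
  · rw [zero_mul, max_eq_right (not_le.1 h).le]

section Network

variable {n d : ℕ} {u : Fin n → ℝ} {θ : Fin n → EuclideanSpace ℝ (Fin d)}

lemma net_eq_sum_act_mul_inner (x : EuclideanSpace ℝ (Fin d)) :
    net u θ x = ∑ j, u j * act (θ j) x * ⟪θ j, x⟫ := by
  simp only [net, mul_assoc, act_mul_inner]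

lemma exists_act_eq_one_of_one_le_margin {x : EuclideanSpace ℝ (Fin d)} {y : ℝ}
    (h : 1 ≤ y * net u θ x) : ∃ j, act (θ j) x = 1 := by
  by_contra! hj
  have hnet : net u θ x = 0 := by
    rw [net_eq_sum_act_mul_inner]
    exact sum_eq_zero fun j _ => by simp [(act_eq_zero_or_one _ _).resolve_right (hj j)]
  rw [hnet, mul_zero] at h
  norm_num at h

end Network

section KKT

variable {n m d : ℕ} (u : Fin n → ℝ) (θ : Fin n → EuclideanSpace ℝ (Fin d))
  (x : Fin m → EuclideanSpace ℝ (Fin d)) (y lam : Fin m → ℝ)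

noncomputable def kktResidual (j : Fin n) : EuclideanSpace ℝ (Fin d) :=
  θ j - u j • ∑ i, (lam i * y i * act (θ j) (x i)) • x i

noncomputable def activeMass (i : Fin m) : ℝ :=
  ∑ j, u j ^ 2 * lam i * act (θ j) (x i)

variable {u θ x y lam}

lemma activeMass_term_nonneg (hlam : ∀ k, 0 ≤ lam k) (i : Fin m) (j : Fin n) :
    0 ≤ u j ^ 2 * lam i * act (θ j) (x i) :=
  mul_nonneg (mul_nonneg (sq_nonneg _) (hlam i)) (act_nonneg _ _)

lemma activeMass_nonneg (hlam : ∀ k, 0 ≤ lam k) (i : Fin m) : 0 ≤ activeMass u θ x lam i :=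
  sum_nonneg fun j _ => activeMass_term_nonneg hlam i j

lemma activeMass_le_lam (hu : ∑ j, u j ^ 2 = 1) (hlam : ∀ k, 0 ≤ lam k) (i : Fin m) :
    activeMass u θ x lam i ≤ lam i :=
  calc activeMass u θ x lam i ≤ ∑ j, u j ^ 2 * lam i :=
        sum_le_sum fun j _ =>
          mul_le_of_le_one_right (mul_nonneg (sq_nonneg _) (hlam i)) (act_le_one _ _)
    _ = lam i := by rw [← sum_mul, hu, one_mul]

lemma lam_le_card_mul_activeMass (hu : ∀ j, u j ^ 2 = (n : ℝ)⁻¹) (hlam : ∀ k, 0 ≤ lam k)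
    {i : Fin m} (hpf : 1 ≤ y i * net u θ (x i)) : lam i ≤ n * activeMass u θ x lam i := by
  obtain ⟨j, hj⟩ := exists_act_eq_one_of_one_le_margin hpf
  have hn : (0 : ℝ) < n := by exact_mod_cast j.pos
  have hterm : u j ^ 2 * lam i * act (θ j) (x i) ≤ activeMass u θ x lam i :=
    single_le_sum (fun j _ => activeMass_term_nonneg hlam i j) (mem_univ j)
  rw [hj, hu, mul_one] at hterm
  calc lam i = n * ((n : ℝ)⁻¹ * lam i) := by field_simp
    _ ≤ n * activeMass u θ x lam i := by gcongr

lemma inner_eq_add_kktResidual (i : Fin m) (j : Fin n) :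
    ⟪θ j, x i⟫ = u j * ∑ k, lam k * y k * act (θ j) (x k) * ⟪x k, x i⟫
      + ⟪kktResidual u θ x y lam j, x i⟫ := by
  simp [kktResidual, inner_sub_left, real_inner_smul_left, sum_inner, mul_sum]

lemma abs_offDiagonal_sum_le (hy : ∀ k, |y k| = 1) (hlam : ∀ k, 0 ≤ lam k) {φ : ℝ} (hφ : 0 ≤ φ)
    {i : Fin m} (hortho : ∀ k, k ≠ i → |⟪x k, x i⟫| ≤ φ) (j : Fin n) :
    |∑ k ∈ univ.erase i, lam k * y k * act (θ j) (x k) * ⟪x k, x i⟫| ≤ φ * ∑ k, lam k :=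
  calc |∑ k ∈ univ.erase i, lam k * y k * act (θ j) (x k) * ⟪x k, x i⟫|
      ≤ ∑ k ∈ univ.erase i, lam k * φ := by
        refine (abs_sum_le_sum_abs _ _).trans (sum_le_sum fun k hk => ?_)
        rw [abs_mul, abs_mul, abs_mul, hy k, abs_of_nonneg (hlam k),
          abs_of_nonneg (act_nonneg _ _), mul_one, mul_assoc]
        have hip := hortho k (ne_of_mem_erase hk)
        gcongr
        · exact hlam k
        · exact (mul_le_of_le_one_left (abs_nonneg _) (act_le_one _ _)).trans hip
    _ ≤ ∑ k, lam k * φ :=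
        sum_le_sum_of_subset_of_nonneg (subset_univ _) fun k _ _ => mul_nonneg (hlam k) hφ
    _ = φ * ∑ k, lam k := by rw [← sum_mul, mul_comm]

lemma margin_sub_activeMass_mul_normSq (i : Fin m) (hy : |y i| = 1) :
    y i * net u θ (x i) - activeMass u θ x lam i * ‖x i‖ ^ 2 =
      ∑ j, y i * u j * act (θ j) (x i) *
        (u j * ∑ k ∈ univ.erase i, lam k * y k * act (θ j) (x k) * ⟪x k, x i⟫
          + ⟪kktResidual u θ x y lam j, x i⟫) := by
  have hy2 : y i ^ 2 = 1 := by rw [← sq_abs, hy, one_pow]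
  rw [net_eq_sum_act_mul_inner, activeMass, mul_sum, sum_mul, ← sum_sub_distrib]
  refine sum_congr rfl fun j _ => ?_
  rw [inner_eq_add_kktResidual (y := y) (lam := lam), ← add_sum_erase _ _ (mem_univ i),
    real_inner_self_eq_norm_sq]
  rcases act_eq_zero_or_one (θ j) (x i) with h | h <;> rw [h]
  · ring
  · linear_combination (u j ^ 2 * lam i * ‖x i‖ ^ 2) * hy2

lemma abs_margin_sub_activeMass_mul_normSq_le (hu : ∑ j, u j ^ 2 = 1) (hy : ∀ k, |y k| = 1)
    (hlam : ∀ k, 0 ≤ lam k) {φ : ℝ} (hφ : 0 ≤ φ) {i : Fin m}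
    (hortho : ∀ k, k ≠ i → |⟪x k, x i⟫| ≤ φ) :
    |y i * net u θ (x i) - activeMass u θ x lam i * ‖x i‖ ^ 2| ≤
      φ * ∑ k, lam k + ‖x i‖ * √(∑ j, ‖kktResidual u θ x y lam j‖ ^ 2) := by
  set e := kktResidual u θ x y lam
  rw [margin_sub_activeMass_mul_normSq i (hy i)]
  calc _ ≤ ∑ j, (u j ^ 2 * (φ * ∑ k, lam k) + ‖x i‖ * (|u j| * ‖e j‖)) := by
        refine (abs_sum_le_sum_abs _ _).trans (sum_le_sum fun j _ => ?_)
        have hcross := abs_offDiagonal_sum_le (θ := θ) hy hlam hφ hortho j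
        have hres := abs_real_inner_le_norm (e j) (x i)
        rw [abs_mul, abs_mul, abs_mul, hy i, one_mul, abs_of_nonneg (act_nonneg _ _)]
        calc |u j| * act (θ j) (x i) * |u j * _ + ⟪e j, x i⟫|
            ≤ |u j| * 1 * (|u j| * (φ * ∑ k, lam k) + ‖e j‖ * ‖x i‖) := by
              gcongr
              · exact act_le_one _ _
              · exact (abs_add_le _ _).trans (by rw [abs_mul]; gcongr)
          _ = _ := by rw [mul_one, mul_add, ← mul_assoc, abs_mul_abs_self]; ring
    _ = (∑ j, u j ^ 2) * (φ * ∑ k, lam k) + ‖x i‖ * ∑ j, |u j| * ‖e j‖ := by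
        rw [sum_add_distrib, ← sum_mul, ← mul_sum]
    _ ≤ φ * ∑ k, lam k + ‖x i‖ * √(∑ j, ‖e j‖ ^ 2) := by
        rw [hu, one_mul]
        gcongr
        simpa [sq_abs, hu] using Real.sum_mul_le_sqrt_mul_sqrt univ (fun j => |u j|) (‖e ·‖)

lemma activeMass_le_or (hu : ∑ j, u j ^ 2 = 1) (hy : ∀ k, |y k| = 1) (hlam : ∀ k, 0 ≤ lam k)
    {φ ψ ε δ : ℝ} (hφ : 0 ≤ φ) (hortho : ∀ k l, k ≠ l → |⟪x k, x l⟫| ≤ φ) (hψ : ψ ≤ 0.1)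
    (hstat : √(∑ j, ‖kktResidual u θ x y lam j‖ ^ 2) ≤ ε) (hδ : 0 ≤ δ) {i : Fin m}
    (hnorm : 1 - ψ ≤ ‖x i‖ ^ 2 ∧ ‖x i‖ ^ 2 ≤ 1 + ψ)
    (hcs : lam i * (y i * net u θ (x i) - 1) ≤ δ) :
    activeMass u θ x lam i ≤ 2.5 ∨
      0.9 * activeMass u θ x lam i ≤ 1 + φ * ∑ k, lam k + 1.05 * ε + 0.4 * δ := by
  set T := activeMass u θ x lam i
  have hT : 0 ≤ T := activeMass_nonneg hlam i
  have hnorm_le : ‖x i‖ ≤ 1.05 := by nlinarith [norm_nonneg (x i)]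
  have hres : ‖x i‖ * √(∑ j, ‖kktResidual u θ x y lam j‖ ^ 2) ≤ 1.05 * ε :=
    mul_le_mul hnorm_le hstat (Real.sqrt_nonneg _) (by norm_num)
  have hmargin : 0.9 * T ≤ y i * net u θ (x i) + φ * ∑ k, lam k + 1.05 * ε := by
    have := (abs_le.1 (abs_margin_sub_activeMass_mul_normSq_le (θ := θ) hu hy hlam hφ
      fun k hk => hortho k i hk)).1
    nlinarith [mul_le_mul_of_nonneg_left (show 0.9 ≤ ‖x i‖ ^ 2 by linarith) hT]
  rcases le_or_gt (lam i) 2.5 with hsmall | hlarge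
  · exact .inl ((activeMass_le_lam hu hlam i).trans hsmall)
  · right
    -- complementary slackness: `y_i N(θ, x_i) ≤ 1 + δ / λ_i ≤ 1 + 0.4 δ`
    nlinarith [mul_le_mul_of_nonneg_left hmargin (hlam i), mul_nonneg hδ (sub_nonneg.2 hlarge.le)]

theorem activeMass_le (hu : ∀ j, u j ^ 2 = (n : ℝ)⁻¹) (hy : ∀ k, |y k| = 1)
    (hlam : ∀ k, 0 ≤ lam k) {φ ψ ε δ : ℝ} (hφ₀ : 0 ≤ φ) (hφ : φ ≤ 1 / (4 * m * n))
    (hortho : ∀ k l, k ≠ l → |⟪x k, x l⟫| ≤ φ) (hψ : ψ ≤ 0.1)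
    (hnorm : ∀ k, 1 - ψ ≤ ‖x k‖ ^ 2 ∧ ‖x k‖ ^ 2 ≤ 1 + ψ)
    (hstat : √(∑ j, ‖kktResidual u θ x y lam j‖ ^ 2) ≤ ε) (hδ : 0 ≤ δ)
    (hcs : ∀ k, lam k * (y k * net u θ (x k) - 1) ≤ δ) (hpf : ∀ k, 1 ≤ y k * net u θ (x k))
    (i : Fin m) : activeMass u θ x lam i ≤ 2.5 + 5.25 * ε + 2.4 * δ := by
  obtain ⟨j, -⟩ := exists_act_eq_one_of_one_le_margin (hpf i)
  have hn : (0 : ℝ) < n := by exact_mod_cast j.pos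
  have hm : (0 : ℝ) < m := by exact_mod_cast i.pos
  have hu₁ : ∑ j, u j ^ 2 = 1 := by simp [hu, hn.ne']
  have hε : 0 ≤ ε := (Real.sqrt_nonneg _).trans hstat
  have hdich := fun k => activeMass_le_or hu₁ hy hlam hφ₀ hortho hψ hstat hδ (hnorm k) (hcs k)
  obtain ⟨i₀, -, hmax⟩ := exists_max_image univ lam ⟨i, mem_univ i⟩
  have hcross : 4 * (φ * ∑ k, lam k) ≤ activeMass u θ x lam i₀ := by
    have hsum : ∑ k, lam k ≤ m * lam i₀ := by
      simpa using sum_le_card_nsmul univ lam (lam i₀) fun k _ => hmax k (mem_univ k)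
    have hφmn : 4 * m * n * φ ≤ 1 := by rwa [le_div_iff₀' (by positivity)] at hφ
    refine le_of_mul_le_mul_left ?_ hn
    calc n * (4 * (φ * ∑ k, lam k)) ≤ 4 * m * n * φ * lam i₀ := by
          nlinarith [mul_le_mul_of_nonneg_left hsum (by positivity : 0 ≤ 4 * n * φ)]
      _ ≤ lam i₀ := mul_le_of_le_one_left (hlam i₀) hφmn
      _ ≤ n * activeMass u θ x lam i₀ := lam_le_card_mul_activeMass hu hlam (hpf i₀)
  -- either `4 B ≤ T_{i₀} ≤ 2.5` or `2.6 B ≤ 1 + 1.05 ε + 0.4 δ`, where `B = φ ∑_k λ_k`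
  have hcross' : φ * ∑ k, lam k ≤ 0.625 + 0.41 * ε + 0.16 * δ := by
    rcases hdich i₀ with h | h <;> linarith
  rcases hdich i with h | h <;> linarith

end KKT

theorem stmt_13_general
    (n d m : ℕ)
    (ε δ εd ψ φ : ℝ)
    (hεdle : εd ≤ 1)
    (hεpos : 0 < ε) (hεle : ε ≤ 1)
    (hδpos : 0 < δ) (hδle : δ ≤ 1)
    (hψ : ψ ≤ 0.1) (hφ : φ ≤ εd / (4 * m * n))
    (u : Fin n → ℝ)
    (hu : ∀ j, u j = -(1 / Real.sqrt n) ∨ u j = 1 / Real.sqrt n)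
    (x : Fin m → EuclideanSpace ℝ (Fin d)) (y : Fin m → ℝ)
    (hy : ∀ i, y i = 1 ∨ y i = -1)
    (hnorm : ∀ i, 1 - ψ ≤ ‖x i‖ ^ 2 ∧ ‖x i‖ ^ 2 ≤ 1 + ψ)
    (hortho : ∀ i j, i ≠ j → |(inner ℝ (x i) (x j) : ℝ)| ≤ φ)
    (θ : Fin n → EuclideanSpace ℝ (Fin d)) (lam : Fin m → ℝ)
    (hlam : ∀ i, 0 ≤ lam i)
    (hstat : Real.sqrt (∑ j, ‖θ j - u j • ∑ i, (lam i * y i * act (θ j) (x i)) • x i‖ ^ 2) ≤ ε)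
    (hcs : ∀ i, lam i * (y i * net u θ (x i) - 1) ≤ δ)
    (hpf : ∀ i, 1 ≤ y i * net u θ (x i)) :
    (∀ i, max (∑ j ∈ Finset.univ.filter (fun j => 0 < u j), u j ^ 2 * lam i * act (θ j) (x i))
        (∑ j ∈ Finset.univ.filter (fun j => u j < 0), u j ^ 2 * lam i * act (θ j) (x i)) ≤
      2.5 + 5.25 * ε + 2.4 * δ) ∧
    2.5 + 5.25 * ε + 2.4 * δ ≤ 10.2 ∧
    (∀ i, ∑ j, u j ^ 2 * lam i * act (θ j) (x i) ≤ 5 + 10.5 * ε + 4.8 * δ) ∧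
    5 + 10.5 * ε + 4.8 * δ ≤ 20.4 ∧
    (∀ i, lam i ≤ n * (5 + 10.5 * ε + 4.8 * δ)) ∧
    (n : ℝ) * (5 + 10.5 * ε + 4.8 * δ) ≤ 20.4 * n := by
  have hu₂ : ∀ j, u j ^ 2 = (n : ℝ)⁻¹ := fun j => by
    rw [sq_eq_sq_iff_eq_or_eq_neg.2 (hu j).symm, div_pow, one_pow,
      Real.sq_sqrt (Nat.cast_nonneg n), one_div]
  have hy₁ : ∀ i, |y i| = 1 := fun i => by rcases hy i with h | h <;> simp [h]
  have hφ₁ : max φ 0 ≤ 1 / (4 * m * n) := max_le (hφ.trans (by gcongr)) (by positivity)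
  have hmass : ∀ i, activeMass u θ x lam i ≤ 2.5 + 5.25 * ε + 2.4 * δ :=
    activeMass_le hu₂ hy₁ hlam (le_max_right _ _) hφ₁
      (fun k l hkl => (hortho k l hkl).trans (le_max_left _ _)) hψ hnorm hstat hδpos.le hcs hpf
  have hpart : ∀ i s, ∑ j ∈ s, u j ^ 2 * lam i * act (θ j) (x i) ≤ activeMass u θ x lam i :=
    fun i s => sum_le_sum_of_subset_of_nonneg (subset_univ s) fun j _ _ =>
      activeMass_term_nonneg hlam i j
  refine ⟨fun i => max_le ((hpart i _).trans (hmass i)) ((hpart i _).trans (hmass i)),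
    by linarith, fun i => (hmass i).trans (by linarith), by linarith, fun i => ?_, by nlinarith⟩
  calc lam i ≤ n * activeMass u θ x lam i := lam_le_card_mul_activeMass hu₂ hlam (hpf i)
    _ ≤ n * (5 + 10.5 * ε + 4.8 * δ) := by gcongr; linarith [hmass i]

/-- Upper bounds on the KKT multipliers of an approximate KKT point of the
margin-maximization problem for a two-layer ReLU network on nearly-orthogonal data. -/
theorem stmt_13
    (n d m : ℕ)
    (ε δ εd ψ φ : ℝ)
    (hεdpos : 0 < εd) (hεdle : εd ≤ 1)
    (hεpos : 0 < ε) (hεle : ε ≤ 1)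
    (hδpos : 0 < δ) (hδle : δ ≤ 1)
    (hψ : ψ ≤ 0.1) (hφ : φ ≤ εd / (4 * m * n))
    (u : Fin n → ℝ)
    (hu : ∀ j, u j = -(1 / Real.sqrt n) ∨ u j = 1 / Real.sqrt n)
    (x : Fin m → EuclideanSpace ℝ (Fin d)) (y : Fin m → ℝ)
    (hy : ∀ i, y i = 1 ∨ y i = -1)
    (hnorm : ∀ i, 1 - ψ ≤ ‖x i‖ ^ 2 ∧ ‖x i‖ ^ 2 ≤ 1 + ψ)
    (hortho : ∀ i j, i ≠ j → |(inner ℝ (x i) (x j) : ℝ)| ≤ φ)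
    (θ : Fin n → EuclideanSpace ℝ (Fin d)) (lam : Fin m → ℝ)
    (hlam : ∀ i, 0 ≤ lam i)
    (hstat : Real.sqrt (∑ j, ‖θ j - u j • ∑ i, (lam i * y i * act (θ j) (x i)) • x i‖ ^ 2) ≤ ε)
    (hcs : ∀ i, lam i * (y i * net u θ (x i) - 1) ≤ δ)
    (hpf : ∀ i, 1 ≤ y i * net u θ (x i)) :
    (∀ i, max (∑ j ∈ Finset.univ.filter (fun j => 0 < u j), u j ^ 2 * lam i * act (θ j) (x i))
        (∑ j ∈ Finset.univ.filter (fun j => u j < 0), u j ^ 2 * lam i * act (θ j) (x i)) ≤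
      2.5 + 5.25 * ε + 2.4 * δ) ∧
    2.5 + 5.25 * ε + 2.4 * δ ≤ 10.2 ∧
    (∀ i, ∑ j, u j ^ 2 * lam i * act (θ j) (x i) ≤ 5 + 10.5 * ε + 4.8 * δ) ∧
    5 + 10.5 * ε + 4.8 * δ ≤ 20.4 ∧
    (∀ i, lam i ≤ n * (5 + 10.5 * ε + 4.8 * δ)) ∧
    (n : ℝ) * (5 + 10.5 * ε + 4.8 * δ) ≤ 20.4 * n :=
  stmt_13_general n d m ε δ εd ψ φ hεdle hεpos hεle hδpos hδle hψ hφ u hu x y hy hnorm hortho θ lam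
    hlam hstat hcs hpf
end

section
/- Let n, d, m ∈ ℕ, let 0 < ε_d ≤ 1, 0 < ε ≤ 1, 0 < δ ≤ 1, and fix u_1,…,u_n ∈ {−1/√n, 1/√n}. Let S satisfy Assumption(ψ, φ) with ψ ≤ 0.1 and φ ≤ ε_d/(4mn), and suppose θ = (w_1,…,w_n) is an (ε, δ)-approximate KKT point of the margin-maximization problem w.r.t. S with multipliers λ_1,…,λ_m. Fix l ∈ [m], set c = ε_d/(2mn), Δ_j = c·Σ_{k∈[m], k≠l} sign(⟨x_k, w_j⟩)·x_k, ŵ_j = w_j − u_j λ_l y_l σ'_{l,j}(θ) x_l, and w̃_j = ŵ_j + |u_j| λ_l σ'_{l,j}(θ) Δ_j. Then for every r ∈ [m] with r ≠ l and every j ∈ [n]: sign(⟨w̃_j, x_r⟩) = sign(⟨w_j, x_r⟩); in particular, the activation pattern of the corrected unlearned network on the retained data points equals that of the original network. -/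
/-- `sign(z) = 1` if `z ≥ 0`, and `-1` otherwise. -/
noncomputable def sgn (z : ℝ) : ℝ := if 0 ≤ z then 1 else -1

/-!
Write `T = ⟨w_j, x_r⟩`. In `⟨w̃_j, x_r⟩` the summand `k = r` of the correction `Δ_j` contributes
`c · a · sgn(T) · ‖x_r‖²` with `a = |u_j| λ_l σ'_{l,j} ≥ 0`, a push of size at least `0.9 · a c`
in the direction of `sgn(T)`. Everything else is small by near-orthogonality: the other summands of
`Δ_j` give at most `a c m φ ≤ a c / 4`, and removing `u_j λ_l y_l σ'_{l,j} x_l` gives at most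
`a φ ≤ a c / 2`. A push of size `A` away from `0` plus an error of size at most `A` cannot change
the sign of `T`.
-/

open Finset RealInnerProductSpace

lemma abs_sgn (z : ℝ) : |sgn z| = 1 := by
  unfold sgn; split_ifs <;> norm_num

lemma sgn_add_sgn_mul_add {T A e : ℝ} (he : |e| ≤ A) : sgn (T + sgn T * A + e) = sgn T := by
  obtain ⟨he₁, he₂⟩ := abs_le.mp he
  unfold sgn
  by_cases hT : 0 ≤ T
  · simp only [if_pos hT]
    rw [if_pos (by linarith)]
  · simp only [if_neg hT]
    rw [if_neg (by linarith)]

section InnerProductSpace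

variable {E : Type*} [NormedAddCommGroup E] [InnerProductSpace ℝ E]

lemma abs_inner_sum_sgn_smul_sub_le {ι : Type*} [DecidableEq ι] {s : Finset ι} {v : ι → E}
    {w : E} {r : ι} {φ : ℝ} (hr : r ∈ s) (hv : ∀ k ∈ s, k ≠ r → |⟪v k, v r⟫| ≤ φ) :
    |⟪∑ k ∈ s, sgn ⟪v k, w⟫ • v k, v r⟫ - sgn ⟪w, v r⟫ * ‖v r‖ ^ 2| ≤ #(s.erase r) * φ := by
  have hsplit : ⟪∑ k ∈ s, sgn ⟪v k, w⟫ • v k, v r⟫ - sgn ⟪w, v r⟫ * ‖v r‖ ^ 2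
      = ∑ k ∈ s.erase r, sgn ⟪v k, w⟫ * ⟪v k, v r⟫ := by
    rw [sum_inner, ← add_sum_erase _ _ hr, real_inner_smul_left, real_inner_self_eq_norm_sq,
      real_inner_comm (v r) w]
    simp only [real_inner_smul_left, add_sub_cancel_left]
  rw [hsplit, ← nsmul_eq_mul, ← sum_const]
  refine (abs_sum_le_sum_abs _ _).trans (sum_le_sum fun k hk => ?_)
  rw [abs_mul, abs_sgn, one_mul]
  exact hv k (mem_of_mem_erase hk) (ne_of_mem_erase hk)

lemma sgn_inner_sub_smul_add_smul_smul {w z v Δ : E} {a b c φ μ : ℝ} (hb : |b| ≤ a)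
    (hc : 0 ≤ c) (hzv : |⟪z, v⟫| ≤ φ) (hΔ : |⟪Δ, v⟫ - sgn ⟪w, v⟫ * ‖v‖ ^ 2| ≤ μ)
    (hμ : c * μ + φ ≤ c * ‖v‖ ^ 2) :
    sgn ⟪(w - b • z) + a • c • Δ, v⟫ = sgn ⟪w, v⟫ := by
  have ha : 0 ≤ a := (abs_nonneg b).trans hb
  have hexpand : ⟪(w - b • z) + a • c • Δ, v⟫ = ⟪w, v⟫ + sgn ⟪w, v⟫ * (a * (c * ‖v‖ ^ 2))
      + (a * c * (⟪Δ, v⟫ - sgn ⟪w, v⟫ * ‖v‖ ^ 2) - b * ⟪z, v⟫) := by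
    simp only [inner_add_left, inner_sub_left, real_inner_smul_left]
    ring
  rw [hexpand]
  refine sgn_add_sgn_mul_add ?_
  calc |a * c * (⟪Δ, v⟫ - sgn ⟪w, v⟫ * ‖v‖ ^ 2) - b * ⟪z, v⟫|
      ≤ a * c * μ + a * φ := by
        refine (abs_sub _ _).trans (add_le_add ?_ ?_)
        · rw [abs_mul, abs_of_nonneg (by positivity)]
          gcongr
        · rw [abs_mul]
          exact mul_le_mul hb hzv (abs_nonneg _) ha
    _ = a * (c * μ + φ) := by ring
    _ ≤ a * (c * ‖v‖ ^ 2) := by gcongr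

end InnerProductSpace

theorem stmt_15_general
    (n d m : ℕ)
    (εd ψ φ : ℝ)
    (hεdpos : 0 < εd) (hεdle : εd ≤ 1)
    (hψ : ψ ≤ 0.1) (hφ : φ ≤ εd / (4 * m * n))
    (u : Fin n → ℝ)
    (x : Fin m → EuclideanSpace ℝ (Fin d)) (y : Fin m → ℝ)
    (hy : ∀ i, y i = 1 ∨ y i = -1)
    (hnorm : ∀ i, 1 - ψ ≤ ‖x i‖ ^ 2 ∧ ‖x i‖ ^ 2 ≤ 1 + ψ)
    (hortho : ∀ i j, i ≠ j → |(inner ℝ (x i) (x j) : ℝ)| ≤ φ)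
    (θ : Fin n → EuclideanSpace ℝ (Fin d)) (lam : Fin m → ℝ)
    (hlam : ∀ i, 0 ≤ lam i)
    (l : Fin m)
    (θt : Fin n → EuclideanSpace ℝ (Fin d))
    (hθt : ∀ j, θt j = (θ j - (u j * lam l * y l * act (θ j) (x l)) • x l) +
        (|u j| * lam l * act (θ j) (x l)) •
          ((εd / (2 * m * n)) •
            ∑ k ∈ Finset.univ.erase l, sgn ((inner ℝ (x k) (θ j) : ℝ)) • x k)) :
    ∀ r, r ≠ l → ∀ j,
      sgn ((inner ℝ (θt j) (x r) : ℝ)) = sgn ((inner ℝ (θ j) (x r) : ℝ)) := by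
  intro r hrl j
  have hn : (1 : ℝ) ≤ n := by exact_mod_cast j.pos
  have hm : (0 : ℝ) < m := by exact_mod_cast r.pos
  have hφ0 : 0 ≤ φ := (abs_nonneg _).trans (hortho r l hrl)
  have hφc : φ ≤ εd / (2 * m * n) / 2 := by convert hφ using 1; ring
  have hmφ : m * φ ≤ 1 / 4 := by
    calc m * φ ≤ m * (εd / (4 * m * n)) := by gcongr
      _ = εd / (4 * n) := by field_simp
      _ ≤ 1 / 4 := by rw [div_le_div_iff₀ (by positivity) (by norm_num)]; nlinarith
  have hb : |u j * lam l * y l * act (θ j) (x l)| ≤ |u j| * lam l * act (θ j) (x l) := by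
    have hyl : |y l| = 1 := by rcases hy l with h | h <;> simp [h]
    rw [abs_mul, abs_mul, abs_mul, hyl, abs_of_nonneg (hlam l), abs_of_nonneg (act_nonneg _ _),
      mul_one]
  have hΔ := abs_inner_sum_sgn_smul_sub_le (w := θ j) (mem_erase.mpr ⟨hrl, mem_univ r⟩)
    fun k _ hkr => hortho k r hkr
  have hcard : (#((univ.erase l).erase r) : ℝ) ≤ m := by
    exact_mod_cast (card_le_univ _).trans (Fintype.card_fin m).le
  rw [hθt j]
  refine sgn_inner_sub_smul_add_smul_smul hb (by positivity) (hortho l r hrl.symm)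
    (hΔ.trans (mul_le_mul_of_nonneg_right hcard hφ0)) ?_
  have hxr : 0.9 ≤ ‖x r‖ ^ 2 := by linarith [(hnorm r).1]
  nlinarith [show 0 ≤ εd / (2 * m * n) by positivity]

/-- The corrected unlearned weights `w̃_j = ŵ_j + |u_j| λ_l σ'_{l,j} Δ_j`
preserve the activation pattern of the original network on every retained data point:
`sign(⟨w̃_j, x_r⟩) = sign(⟨w_j, x_r⟩)` for all `r ≠ l` and all `j`. -/
theorem stmt_15
    (n d m : ℕ)
    (ε δ εd ψ φ : ℝ)
    (hεdpos : 0 < εd) (hεdle : εd ≤ 1)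
    (hεpos : 0 < ε) (hεle : ε ≤ 1)
    (hδpos : 0 < δ) (hδle : δ ≤ 1)
    (hψ : ψ ≤ 0.1) (hφ : φ ≤ εd / (4 * m * n))
    (u : Fin n → ℝ)
    (hu : ∀ j, u j = -(1 / Real.sqrt n) ∨ u j = 1 / Real.sqrt n)
    (x : Fin m → EuclideanSpace ℝ (Fin d)) (y : Fin m → ℝ)
    (hy : ∀ i, y i = 1 ∨ y i = -1)
    (hnorm : ∀ i, 1 - ψ ≤ ‖x i‖ ^ 2 ∧ ‖x i‖ ^ 2 ≤ 1 + ψ)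
    (hortho : ∀ i j, i ≠ j → |(inner ℝ (x i) (x j) : ℝ)| ≤ φ)
    (θ : Fin n → EuclideanSpace ℝ (Fin d)) (lam : Fin m → ℝ)
    (hlam : ∀ i, 0 ≤ lam i)
    (hstat : Real.sqrt (∑ j, ‖θ j - u j • ∑ i, (lam i * y i * act (θ j) (x i)) • x i‖ ^ 2) ≤ ε)
    (hcs : ∀ i, lam i * (y i * net u θ (x i) - 1) ≤ δ)
    (hpf : ∀ i, 1 ≤ y i * net u θ (x i))
    (l : Fin m)
    (θt : Fin n → EuclideanSpace ℝ (Fin d))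
    (hθt : ∀ j, θt j = (θ j - (u j * lam l * y l * act (θ j) (x l)) • x l) +
        (|u j| * lam l * act (θ j) (x l)) •
          ((εd / (2 * m * n)) •
            ∑ k ∈ Finset.univ.erase l, sgn ((inner ℝ (x k) (θ j) : ℝ)) • x k)) :
    ∀ r, r ≠ l → ∀ j,
      sgn ((inner ℝ (θt j) (x r) : ℝ)) = sgn ((inner ℝ (θ j) (x r) : ℝ)) :=
  stmt_15_general n d m εd ψ φ hεdpos hεdle hψ hφ u x y hy hnorm hortho θ lam hlam l θt hθt
end
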